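/- arXiv:1509.05707 — 4 statements merged into one kernel-verified Lean document; each statement's English description precedes it below -/
import Mathlib

section
/- Let F be a field of characteristic p (where p is a prime or p = 0) and let f ∈ F[x_1,…,x_d] be a nonzero polynomial with f(0) = 0. Then the formal combinatorial degree of f equals deg_p(f), the p-degree of f. -/
open MvPolynomial Finset

/-- The formal `n`-th defect (derived form) of a polynomial `f ∈ F[x_1,…,x_d]`:
`Δ^n f = Σ_{∅ ≠ S ⊆ {1,…,n}} (−1)^{n−|S|} f(Σ_{i∈S} x_{i,1}, …, Σ_{i∈S} x_{i,d})`,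
a polynomial in the `n*d` variables `x_{i,j}`. -/
noncomputable def polDefect {F : Type*} [Field F] {d : ℕ} (n : ℕ) (f : MvPolynomial (Fin d) F) :
    MvPolynomial (Fin n × Fin d) F :=
  ∑ S ∈ Finset.univ.powerset.filter (fun S : Finset (Fin n) => S.Nonempty),
    (-1 : F) ^ (n - S.card) •
      MvPolynomial.aeval (fun j : Fin d => ∑ i ∈ S, MvPolynomial.X (i, j)) f

/-- The `p`-weight of a natural number: the sum of its base-`p` digits (and `t` itself
when `p = 0`). -/
def pWeight (p t : ℕ) : ℕ := if p = 0 then t else (Nat.digits p t).sum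

/-- The `p`-degree of a polynomial: the maximum over the monomials in its support of the
sum of the `p`-weights of the exponents. -/
def pDeg {F : Type*} [Field F] {d : ℕ} (p : ℕ) (f : MvPolynomial (Fin d) F) : ℕ :=
  f.support.sup fun m => ∑ j, pWeight p (m j)


section Helpers
open Nat

lemma pWeight_zero (p : ℕ) : pWeight p 0 = 0 := by simp [pWeight]

lemma ofDigits_eq_zero_of_sum (p : ℕ) : ∀ L : List ℕ, L.sum = 0 → Nat.ofDigits p L = 0 := by
  intro L
  induction L with
  | nil => simp
  | cons d L ih =>
      intro h
      simp only [List.sum_cons, Nat.add_eq_zero] at h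
      simp [Nat.ofDigits_cons, h.1, ih h.2]

lemma pWeight_pos {p t : ℕ} (ht : t ≠ 0) : 1 ≤ pWeight p t := by
  rcases Nat.eq_zero_or_pos (pWeight p t) with h | h
  · exfalso
    apply ht
    unfold pWeight at h
    split at h
    · omega
    · have := ofDigits_eq_zero_of_sum p (Nat.digits p t) h
      rwa [Nat.ofDigits_digits] at this
  · exact h

lemma pWeight_of_prime {p : ℕ} (hp : p.Prime) (t : ℕ) :
    pWeight p t = (Nat.digits p t).sum := by simp [pWeight, hp.ne_zero]

-- Legendre in ℤ
lemma legendre_int {p : ℕ} [hp : Fact p.Prime] (n : ℕ) :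
    ((p : ℤ) - 1) * padicValNat p (n !) = (n : ℤ) - pWeight p n := by
  have h := sub_one_mul_padicValNat_factorial (p := p) n
  have hle := Nat.digit_sum_le p n
  have hp2 := hp.out.two_le
  rw [pWeight_of_prime hp.out]
  have hz : ((p - 1 : ℕ) : ℤ) * (padicValNat p (n !) : ℤ)
      = ((n - (Nat.digits p n).sum : ℕ) : ℤ) := by exact_mod_cast congrArg (Nat.cast (R := ℤ)) h
  rw [Nat.cast_sub hle, Nat.cast_sub (by omega : 1 ≤ p)] at hz
  simpa using hz

lemma kummer_int {p : ℕ} [hp : Fact p.Prime] (a b : ℕ) :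
    ((p : ℤ) - 1) * padicValNat p ((a + b).choose a) =
      (pWeight p a : ℤ) + pWeight p b - pWeight p (a + b) := by
  have hspec : (a + b).choose a * a ! * b ! = (a + b)! := by
    have := Nat.choose_mul_factorial_mul_factorial (Nat.le_add_right a b)
    simpa using this
  have hc : (a + b).choose a ≠ 0 := (Nat.choose_pos (Nat.le_add_right a b)).ne'
  have hv : (padicValNat p ((a + b).choose a) + padicValNat p (a !)) + padicValNat p (b !)
      = padicValNat p ((a + b)!) := by
    rw [← hspec, padicValNat.mul (mul_ne_zero hc (Nat.factorial_ne_zero a))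
      (Nat.factorial_ne_zero b), padicValNat.mul hc (Nat.factorial_ne_zero a)]
  have l1 := legendre_int (p := p) (a + b)
  have l2 := legendre_int (p := p) a
  have l3 := legendre_int (p := p) b
  have hvz : ((padicValNat p ((a + b).choose a) : ℤ) + padicValNat p (a !)) + padicValNat p (b !)
      = padicValNat p ((a + b)!) := by exact_mod_cast hv
  have key : ((p : ℤ) - 1) * padicValNat p ((a + b).choose a)
      = ((p : ℤ) - 1) * padicValNat p ((a + b)!) - ((p : ℤ) - 1) * padicValNat p (a !)
        - ((p : ℤ) - 1) * padicValNat p (b !) := by rw [← hvz]; ring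
  rw [key, l1, l2, l3]
  push_cast
  ring

lemma pWeight_add_le {p : ℕ} (hp : p.Prime) (a b : ℕ) :
    pWeight p (a + b) ≤ pWeight p a + pWeight p b := by
  haveI : Fact p.Prime := ⟨hp⟩
  have h := kummer_int (p := p) a b
  have h2 : (2 : ℤ) ≤ (p : ℤ) := by exact_mod_cast hp.two_le
  have hnn : (0 : ℤ) ≤ ((p : ℤ) - 1) * padicValNat p ((a + b).choose a) :=
    mul_nonneg (by omega) (Int.natCast_nonneg _)
  omega

lemma cast_choose_ne_zero_iff {F : Type*} [Field F] {p : ℕ} [CharP F p] (hp : p.Prime)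
    (a b : ℕ) : (((a + b).choose a : ℕ) : F) ≠ 0 ↔
      pWeight p (a + b) = pWeight p a + pWeight p b := by
  haveI : Fact p.Prime := ⟨hp⟩
  have hc : (a + b).choose a ≠ 0 := (Nat.choose_pos (Nat.le_add_right a b)).ne'
  have hiff : (((a + b).choose a : ℕ) : F) ≠ 0 ↔ padicValNat p ((a + b).choose a) = 0 := by
    rw [Ne, CharP.cast_eq_zero_iff F p, padicValNat.eq_zero_iff]
    simp [hp.ne_one, hc]
  rw [hiff]
  have h := kummer_int (p := p) a b
  have h2 : (2 : ℤ) ≤ (p : ℤ) := by exact_mod_cast hp.two_le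
  constructor
  · intro hv
    rw [hv] at h
    simp at h
    omega
  · intro he
    have heZ : (pWeight p a : ℤ) + pWeight p b - pWeight p (a + b) = 0 := by omega
    rw [heZ] at h
    rcases mul_eq_zero.mp h with h' | h'
    · exfalso; omega
    · exact_mod_cast h' 

lemma pWeight_sum_le {p : ℕ} (hp : p.Prime) {ι : Type*} (s : Finset ι) (g : ι → ℕ) :
    pWeight p (∑ i ∈ s, g i) ≤ ∑ i ∈ s, pWeight p (g i) := by
  induction s using Finset.cons_induction with
  | empty => simp [pWeight_zero]
  | cons b t hb ih =>
      rw [Finset.sum_cons, Finset.sum_cons]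
      exact le_trans (pWeight_add_le hp _ _) (by omega)

lemma cast_multinomial_ne_zero_iff {F : Type*} [Field F] {p : ℕ} [CharP F p]
    (hp : p.Prime ∨ p = 0) {ι : Type*} [DecidableEq ι] (s : Finset ι) (g : ι → ℕ) :
    ((Nat.multinomial s g : ℕ) : F) ≠ 0 ↔
      ∑ i ∈ s, pWeight p (g i) = pWeight p (∑ i ∈ s, g i) := by
  rcases hp with hp | hp
  · induction s using Finset.cons_induction with
    | empty => simp [pWeight_zero]
    | cons a s ha ih =>
        rw [Nat.multinomial_cons, Finset.sum_cons, Finset.sum_cons]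
        have hle1 := pWeight_add_le hp (g a) (∑ i ∈ s, g i)
        have hle2 := pWeight_sum_le hp s g
        rw [Nat.cast_mul, mul_ne_zero_iff, ih, cast_choose_ne_zero_iff hp]
        omega
  · subst hp
    haveI : CharZero F := CharP.charP_to_charZero F
    simp only [pWeight]
    simp [Nat.cast_ne_zero, (Nat.multinomial_pos s g).ne']


lemma pWeight_p_mul {p : ℕ} (hp : p.Prime) {x : ℕ} (hx : x ≠ 0) :
    pWeight p (p * x) = pWeight p x := by
  have h2 := hp.two_le
  have hpx : p * x ≠ 0 := by positivity
  simp only [pWeight, if_neg hp.ne_zero]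
  rw [Nat.digits_def' (by omega : 1 < p) (by omega : 0 < p * x),
    Nat.mul_mod_right, Nat.mul_div_cancel_left _ (by omega : 0 < p)]
  simp

lemma pWeight_p_pow {p : ℕ} (hp : p.Prime) (e : ℕ) : pWeight p (p ^ e) = 1 := by
  have h2 := hp.two_le
  induction e with
  | zero =>
      simp only [pow_zero, pWeight, if_neg hp.ne_zero]
      rw [Nat.digits_def' (by omega : 1 < p) (by omega : 0 < 1)]
      simp [Nat.mod_eq_of_lt (by omega : 1 < p), Nat.div_eq_of_lt (by omega : 1 < p)]
  | succ e ih =>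
      rw [pow_succ, mul_comm, pWeight_p_mul hp (by positivity), ih]

/-- parts of the digit list starting at exponent `e` -/
def partsAux (p : ℕ) : List ℕ → ℕ → List ℕ
  | [], _ => []
  | d :: L, e => List.replicate d (p ^ e) ++ partsAux p L (e + 1)

lemma partsAux_length (p : ℕ) : ∀ (L : List ℕ) (e : ℕ), (partsAux p L e).length = L.sum := by
  intro L
  induction L with
  | nil => simp [partsAux]
  | cons d L ih => intro e; simp [partsAux, ih]

lemma partsAux_sum (p : ℕ) : ∀ (L : List ℕ) (e : ℕ),
    (partsAux p L e).sum = p ^ e * Nat.ofDigits p L := by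
  intro L
  induction L with
  | nil => simp [partsAux]
  | cons d L ih =>
      intro e
      simp only [partsAux, List.sum_append, List.sum_replicate, smul_eq_mul, ih,
        Nat.ofDigits_cons, pow_succ]
      ring

lemma partsAux_mem {p : ℕ} (hp : p.Prime) : ∀ (L : List ℕ) (e : ℕ),
    ∀ x ∈ partsAux p L e, pWeight p x = 1 := by
  intro L
  induction L with
  | nil => simp [partsAux]
  | cons d L ih =>
      intro e x hx
      simp only [partsAux, List.mem_append, List.mem_replicate] at hx
      rcases hx with ⟨-, rfl⟩ | hx
      · exact pWeight_p_pow hp e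
      · exact ih (e + 1) x hx

lemma exists_parts {p : ℕ} (hp : p.Prime ∨ p = 0) (t : ℕ) :
    ∃ P : List ℕ, P.length = pWeight p t ∧ P.sum = t ∧ ∀ x ∈ P, pWeight p x = 1 := by
  rcases hp with hp | hp
  · refine ⟨partsAux p (Nat.digits p t) 0, ?_, ?_, partsAux_mem hp _ 0⟩
    · rw [partsAux_length]; simp [pWeight, hp.ne_zero]
    · rw [partsAux_sum]; simp [Nat.ofDigits_digits]
  · subst hp
    exact ⟨List.replicate t 1, by simp [pWeight], by simp, by
      intro x hx; rw [List.eq_of_mem_replicate hx]; simp [pWeight]⟩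


lemma exists_witness {p : ℕ} (hp : p.Prime ∨ p = 0) {d : ℕ} (m : Fin d →₀ ℕ) {N : ℕ}
    (hN : N = ∑ j, pWeight p (m j)) :
    ∃ a : Fin N × Fin d →₀ ℕ,
      (∀ i : Fin N, ∃ j, a (i, j) ≠ 0) ∧
      (∀ j, ∑ i, a (i, j) = m j) ∧
      (∀ j, ∑ i, pWeight p (a (i, j)) = pWeight p (m j)) := by
  choose P hlen hsum hmem using fun t => exists_parts hp t
  set Q : List (ℕ × Fin d) :=
    (List.ofFn fun j : Fin d => (P (m j)).map (fun x => (x, j))).flatten with hQdef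
  have hQlen : Q.length = N := by
    rw [hQdef, List.length_flatten, List.map_ofFn]
    rw [show ((List.ofFn (List.length ∘ fun j : Fin d => (P (m j)).map (fun x => (x, j)))).sum)
      = ∑ j : Fin d, ((P (m j)).map (fun x => (x, j))).length from Fin.sum_ofFn _]
    simp only [List.length_map, hlen]
    exact hN.symm
  set v : Fin N → ℕ × Fin d := fun i => Q.get (Fin.cast hQlen.symm i) with hvdef
  have hvQ : ∀ i, v i ∈ Q := fun i => Q.get_mem (Fin.cast hQlen.symm i)
  have hmemQ : ∀ q ∈ Q, pWeight p q.1 = 1 := by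
    intro q hq
    rw [hQdef, List.mem_flatten] at hq
    obtain ⟨l, hl, hql⟩ := hq
    rw [List.mem_ofFn] at hl
    obtain ⟨j, rfl⟩ := hl
    rw [List.mem_map] at hql
    obtain ⟨x, hx, rfl⟩ := hql
    exact hmem (m j) x hx
  refine ⟨Finsupp.equivFunOnFinite.symm fun q => if (v q.1).2 = q.2 then (v q.1).1 else 0,
    ?_, ?_, ?_⟩
  · intro i
    refine ⟨(v i).2, ?_⟩
    show (if (v i).2 = (v i).2 then (v i).1 else 0) ≠ 0
    rw [if_pos rfl]
    intro h0
    have := hmemQ (v i) (hvQ i)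
    rw [h0, pWeight_zero] at this
    omega
  all_goals {
    intro j
    have hcol : ∀ g : ℕ → ℕ,
        (∑ i : Fin N, (if (v i).2 = j then g ((v i).1) else 0)) = ((P (m j)).map g).sum := by
      intro g
      have e1 : (∑ i : Fin N, (if (v i).2 = j then g ((v i).1) else 0))
          = ∑ i : Fin Q.length, (if (Q.get i).2 = j then g ((Q.get i).1) else 0) := by
        refine Fintype.sum_equiv (finCongr hQlen.symm) _ _ fun i => rfl
      set h : ℕ × Fin d → ℕ := fun q => if q.2 = j then g q.1 else 0 with hhdef
      have e2 : (∑ i : Fin Q.length, (if (Q.get i).2 = j then g ((Q.get i).1) else 0))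
          = (Q.map h).sum := by
        conv_rhs => rw [← List.ofFn_get Q]
        rw [List.map_ofFn]
        exact (Fin.sum_ofFn _).symm
      rw [e1, e2, hQdef, List.map_flatten, List.map_ofFn, List.sum_flatten, List.map_ofFn]
      rw [show ((List.ofFn (List.sum ∘ List.map h ∘ fun j' : Fin d =>
          (P (m j')).map (fun x => (x, j')))).sum)
        = ∑ j' : Fin d, (((P (m j')).map (fun x => (x, j'))).map h).sum from Fin.sum_ofFn _]
      have e3 : ∀ j' : Fin d, (((P (m j')).map (fun x => (x, j'))).map h).sum
          = if j' = j then ((P (m j')).map g).sum else 0 := by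
        intro j'
        rw [List.map_map]
        by_cases hj : j' = j
        · subst hj
          rw [if_pos rfl]
          have : (h ∘ fun x => (x, j')) = g := funext fun x => by simp [hhdef]
          rw [this]
        · rw [if_neg hj]
          have : (h ∘ fun x => (x, j')) = fun _ => 0 := by
            funext x
            simp [hhdef, hj]
          rw [this]
          simp [List.map_const']
      rw [Finset.sum_congr rfl fun j' _ => e3 j', Finset.sum_ite_eq' Finset.univ j]
      rw [if_pos (Finset.mem_univ j)]
    simp only [Finsupp.coe_equivFunOnFinite_symm]
    first
    | · exact (hcol id).trans (by rw [List.map_id]; exact hsum (m j))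
    | · have hsplit : ∀ i, pWeight p (if (v i).2 = j then (v i).1 else 0)
            = (if (v i).2 = j then pWeight p ((v i).1) else 0) := fun i => by
          split <;> simp [pWeight_zero]
        rw [Finset.sum_congr rfl fun i _ => hsplit i]
        refine (hcol (pWeight p)).trans ?_
        have hrep : (P (m j)).map (pWeight p) = List.replicate (P (m j)).length 1 := by
          refine List.eq_replicate_iff.mpr ⟨by simp, ?_⟩
          intro b hb
          rw [List.mem_map] at hb
          obtain ⟨x, hx, rfl⟩ := hb
          exact hmem (m j) x hx
        rw [hrep, List.sum_replicate, hlen]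
        simp
  }


noncomputable section PolyHelpers
variable {F : Type*} [Field F] {n d : ℕ}

def colsum (a : Fin n × Fin d →₀ ℕ) : Fin d →₀ ℕ :=
  Finsupp.equivFunOnFinite.symm fun j => ∑ i, a (i, j)

lemma colsum_apply (a : Fin n × Fin d →₀ ℕ) (j : Fin d) : colsum a j = ∑ i, a (i, j) := rfl

def toMat (k : Fin d → Fin n → ℕ) : Fin n × Fin d →₀ ℕ :=
  Finsupp.equivFunOnFinite.symm fun q => k q.2 q.1

lemma toMat_apply (k : Fin d → Fin n → ℕ) (q : Fin n × Fin d) : toMat k q = k q.2 q.1 := rfl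

lemma prod_sum_X_pow (S : Finset (Fin n)) (m : Fin d →₀ ℕ) :
    (∏ j : Fin d, (∑ i ∈ S, X (i, j) : MvPolynomial (Fin n × Fin d) F) ^ (m j))
    = ∑ k ∈ Fintype.piFinset (fun j => Finset.piAntidiag S (m j)),
        ((∏ j, Nat.multinomial S (k j) : ℕ) : MvPolynomial (Fin n × Fin d) F)
          * monomial (toMat k) 1 := by
  rw [Finset.prod_congr rfl (fun j _ => Finset.sum_pow_eq_sum_piAntidiag S
      (fun i => (X (i, j) : MvPolynomial (Fin n × Fin d) F)) (m j))]
  rw [Finset.prod_univ_sum]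
  refine Finset.sum_congr rfl fun k hk => ?_
  rw [Finset.prod_mul_distrib]
  push_cast
  congr 1
  have hsupp : ∀ j i, k j i ≠ 0 → i ∈ S := by
    intro j
    have := (Fintype.mem_piFinset.mp hk) j
    exact (Finset.mem_piAntidiag.mp this).2
  have h1 : ∀ j : Fin d, (∏ i ∈ S, (X (i, j) : MvPolynomial (Fin n × Fin d) F) ^ k j i)
      = ∏ i : Fin n, (X (i, j) : MvPolynomial (Fin n × Fin d) F) ^ k j i := by
    intro j
    refine Finset.prod_subset (Finset.subset_univ S) fun i _ hiS => ?_
    rw [not_imp_comm.mp (hsupp j i) hiS, pow_zero]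
  rw [Finset.prod_congr rfl fun j _ => h1 j, Finset.prod_comm]
  have h2 : (monomial (toMat k) (1 : F)) = ∏ q : Fin n × Fin d, (X q) ^ (toMat k q) := by
    rw [← prod_X_pow_eq_monomial]
    exact Finset.prod_subset (Finset.subset_univ _) fun q _ hq => by
      rw [Finsupp.notMem_support_iff.mp hq, pow_zero]
  rw [h2, Fintype.prod_prod_type]
  rfl

lemma coeff_prodS (S : Finset (Fin n)) (m : Fin d →₀ ℕ) (a : Fin n × Fin d →₀ ℕ) :
    coeff a (∏ j : Fin d, (∑ i ∈ S, X (i, j) : MvPolynomial (Fin n × Fin d) F) ^ (m j))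
    = if (∀ j, (∑ i ∈ S, a (i, j)) = m j ∧ ∀ i, a (i, j) ≠ 0 → i ∈ S)
      then ∏ j, (Nat.multinomial S (fun i => a (i, j)) : F) else 0 := by
  rw [prod_sum_X_pow, MvPolynomial.coeff_sum]
  have hterm : ∀ k, coeff a (((∏ j, Nat.multinomial S (k j) : ℕ) : MvPolynomial (Fin n × Fin d) F)
      * monomial (toMat k) 1)
      = if k = (fun j i => a (i, j)) then ((∏ j, Nat.multinomial S (k j) : ℕ) : F) else 0 := by
    intro k
    rw [← map_natCast (C : F →+* MvPolynomial (Fin n × Fin d) F), coeff_C_mul, coeff_monomial]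
    rw [mul_ite, mul_one, mul_zero]
    have : (toMat k = a) ↔ (k = fun j i => a (i, j)) := by
      constructor
      · intro h
        funext j i
        rw [← toMat_apply k (i, j), h]
      · intro h
        ext q
        rw [toMat_apply, h]
    exact if_congr this rfl rfl
  rw [Finset.sum_congr rfl fun k _ => hterm k, Finset.sum_ite_eq' _ (fun j i => a (i, j))]
  simp only [Fintype.mem_piFinset, Finset.mem_piAntidiag]
  by_cases hc : ∀ j : Fin d, (∑ i ∈ S, a (i, j)) = m j ∧ ∀ i, a (i, j) ≠ 0 → i ∈ S
  · rw [if_pos hc, if_pos hc]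
    push_cast
    rfl
  · rw [if_neg hc, if_neg hc]

lemma multinomial_subset {ι : Type*} [DecidableEq ι] {s t : Finset ι} (hst : s ⊆ t) (g : ι → ℕ)
    (hg : ∀ i ∈ t, i ∉ s → g i = 0) : Nat.multinomial s g = Nat.multinomial t g := by
  unfold Nat.multinomial
  rw [Finset.sum_subset hst hg, Finset.prod_subset hst fun i hi his => by rw [hg i hi his]; rfl]

lemma defect_sign_sum {T : Finset (Fin n)} (hT : T.Nonempty) :
    (∑ S ∈ Finset.univ.powerset.filter (fun S : Finset (Fin n) => S.Nonempty),
      if T ⊆ S then ((-1 : F) ^ (n - S.card)) else 0)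
    = if T = Finset.univ then 1 else 0 := by
  rw [Finset.sum_filter]
  have step1 : ∀ S ∈ Finset.univ.powerset,
      (if S.Nonempty then (if T ⊆ S then ((-1 : F) ^ (n - S.card)) else 0) else 0)
      = if T ⊆ S then ((-1 : F) ^ (n - S.card)) else 0 := by
    intro S _
    by_cases hTS : T ⊆ S
    · simp [hTS, hT.mono hTS]
    · simp [hTS]
  rw [Finset.sum_congr rfl step1, ← Finset.sum_filter]
  -- reindex by U = S \ T over powerset of univ \ T
  have step2 : (∑ S ∈ (Finset.univ.powerset.filter (fun S : Finset (Fin n) => T ⊆ S)),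
      ((-1 : F) ^ (n - S.card)))
      = ∑ U ∈ (Finset.univ \ T).powerset, ((-1 : F) ^ (n - (T.card + U.card))) := by
    refine Finset.sum_nbij' (fun S => S \ T) (fun U => U ∪ T) ?_ ?_ ?_ ?_ ?_
    · intro S hS
      rw [Finset.mem_filter] at hS
      rw [Finset.mem_powerset]
      exact Finset.sdiff_subset_sdiff (Finset.subset_univ S) le_rfl
    · intro U hU
      rw [Finset.mem_powerset] at hU
      rw [Finset.mem_filter, Finset.mem_powerset]
      exact ⟨Finset.subset_univ _, Finset.subset_union_right⟩
    · intro S hS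
      rw [Finset.mem_filter] at hS
      exact Finset.sdiff_union_of_subset hS.2
    · intro U hU
      rw [Finset.mem_powerset] at hU
      have hdisj : Disjoint U T := Finset.disjoint_left.mpr fun x hxU =>
        (Finset.mem_sdiff.mp (hU hxU)).2
      exact Finset.union_sdiff_cancel_right hdisj
    · intro S hS
      rw [Finset.mem_filter] at hS
      congr 1
      rw [Finset.card_sdiff_of_subset hS.2]
      have := Finset.card_le_card hS.2
      have := Finset.card_le_card (Finset.subset_univ S)
      simp only [Finset.card_univ, Fintype.card_fin] at *
      omega
  rw [step2]
  have hTn : T.card ≤ n := by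
    have := Finset.card_le_card (Finset.subset_univ T)
    simpa using this
  have step3 : ∀ U ∈ (Finset.univ \ T).powerset,
      ((-1 : F) ^ (n - (T.card + U.card))) = (-1) ^ (n - T.card) * (-1) ^ U.card := by
    intro U hU
    have hUr : U.card ≤ n - T.card := by
      have h1 := Finset.card_le_card (Finset.mem_powerset.mp hU)
      have h2 : (Finset.univ \ T).card = n - T.card := by
        rw [Finset.card_sdiff_of_subset (Finset.subset_univ T)]
        simp
      omega
    have heven : ((-1 : F) ^ U.card) * ((-1) ^ U.card) = 1 := by
      rw [← pow_add]
      exact Even.neg_one_pow ⟨U.card, rfl⟩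
    calc ((-1 : F) ^ (n - (T.card + U.card)))
        = ((-1 : F) ^ (n - (T.card + U.card))) * (((-1) ^ U.card) * ((-1) ^ U.card)) := by
          rw [heven, mul_one]
      _ = (((-1 : F) ^ (n - (T.card + U.card))) * ((-1) ^ U.card)) * ((-1) ^ U.card) := by ring
      _ = (-1) ^ (n - T.card) * (-1) ^ U.card := by
          rw [← pow_add]
          congr 2
          omega
  rw [Finset.sum_congr rfl step3, ← Finset.mul_sum]
  have hz := Finset.sum_powerset_neg_one_pow_card (x := Finset.univ \ T)
  have hzF : (∑ U ∈ (Finset.univ \ T).powerset, ((-1 : F) ^ U.card))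
      = if Finset.univ \ T = ∅ then 1 else 0 := by
    have := congrArg (fun z : ℤ => (z : F)) hz
    push_cast at this
    convert this using 2 <;> simp
  rw [hzF]
  by_cases hTu : T = Finset.univ
  · rw [if_pos hTu, if_pos (by rw [hTu]; exact Finset.sdiff_self _)]
    have : T.card = n := by rw [hTu]; simp
    rw [this, Nat.sub_self, pow_zero, mul_one]
  · rw [if_neg hTu, if_neg, mul_zero]
    intro hemp
    exact hTu (Finset.univ_subset_iff.mp (Finset.sdiff_eq_empty_iff_subset.mp hemp))

lemma coeff_aevalS (S : Finset (Fin n)) (f : MvPolynomial (Fin d) F) (a : Fin n × Fin d →₀ ℕ) :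
    coeff a (aeval (fun j : Fin d => ∑ i ∈ S, X (i, j)) f)
    = if (∀ i j, a (i, j) ≠ 0 → i ∈ S)
      then coeff (colsum a) f * ∏ j, (Nat.multinomial S (fun i => a (i, j)) : F) else 0 := by
  conv_lhs => rw [← f.support_sum_monomial_coeff]
  rw [map_sum, MvPolynomial.coeff_sum]
  have hterm : ∀ m ∈ f.support, coeff a (aeval (fun j : Fin d => ∑ i ∈ S, X (i, j))
        (monomial m (coeff m f)))
      = coeff m f * (if (∀ j, (∑ i ∈ S, a (i, j)) = m j ∧ ∀ i, a (i, j) ≠ 0 → i ∈ S)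
          then ∏ j, (Nat.multinomial S (fun i => a (i, j)) : F) else 0) := by
    intro m _
    rw [aeval_monomial, Finsupp.prod_fintype _ _ (fun j => pow_zero _)]
    have : algebraMap F (MvPolynomial (Fin n × Fin d) F) (coeff m f) = C (coeff m f) := rfl
    rw [this, coeff_C_mul, coeff_prodS]
  rw [Finset.sum_congr rfl hterm]
  by_cases hrows : ∀ i j, a (i, j) ≠ 0 → i ∈ S
  · rw [if_pos hrows]
    have hcond : ∀ m : Fin d →₀ ℕ,
        (∀ j, (∑ i ∈ S, a (i, j)) = m j ∧ ∀ i, a (i, j) ≠ 0 → i ∈ S) ↔ m = colsum a := by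
      intro m
      constructor
      · intro h
        ext j
        rw [colsum_apply, ← (h j).1]
        exact (Finset.sum_subset (Finset.subset_univ S) fun i _ hiS =>
          not_imp_comm.mp (fun hne => hrows i j hne) hiS)
      · rintro rfl j
        refine ⟨?_, fun i => hrows i j⟩
        rw [colsum_apply]
        exact Finset.sum_subset (Finset.subset_univ S) fun i _ hiS =>
          not_imp_comm.mp (fun hne => hrows i j hne) hiS
    have : ∀ m ∈ f.support, coeff m f * (if (∀ j, (∑ i ∈ S, a (i, j)) = m j ∧
          ∀ i, a (i, j) ≠ 0 → i ∈ S)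
          then ∏ j, (Nat.multinomial S (fun i => a (i, j)) : F) else 0)
        = if m = colsum a then coeff m f * ∏ j, (Nat.multinomial S (fun i => a (i, j)) : F)
          else 0 := by
      intro m _
      rw [if_congr (hcond m) rfl rfl, mul_ite, mul_zero]
    rw [Finset.sum_congr rfl this, Finset.sum_ite_eq' f.support (colsum a)]
    by_cases hmem : colsum a ∈ f.support
    · rw [if_pos hmem]
    · rw [if_neg hmem, MvPolynomial.notMem_support_iff.mp hmem, zero_mul]
  · rw [if_neg hrows]
    refine Finset.sum_eq_zero fun m _ => ?_
    rw [if_neg fun h => hrows ?_, mul_zero]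
    intro i j
    exact fun hne => (h j).2 i hne

lemma coeff_polDefect (f : MvPolynomial (Fin d) F) (h0 : constantCoeff f = 0)
    (a : Fin n × Fin d →₀ ℕ) :
    coeff a (polDefect n f)
    = if (∀ i : Fin n, ∃ j, a (i, j) ≠ 0)
      then coeff (colsum a) f * ∏ j, (Nat.multinomial Finset.univ (fun i => a (i, j)) : F)
      else 0 := by
  rw [polDefect, MvPolynomial.coeff_sum]
  simp only [MvPolynomial.coeff_smul, coeff_aevalS, smul_eq_mul]
  by_cases ha : a = 0
  · subst ha
    have hc0 : coeff (colsum (0 : Fin n × Fin d →₀ ℕ)) f = 0 := by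
      have hz : colsum (0 : Fin n × Fin d →₀ ℕ) = 0 := by
        ext j; rw [colsum_apply]; simp
      rw [hz, show coeff (0 : Fin d →₀ ℕ) f = constantCoeff f by
        simp [MvPolynomial.constantCoeff_eq], h0]
    simp [hc0]
  · -- a ≠ 0
    set T : Finset (Fin n) := a.support.image Prod.fst with hTdef
    have hT : T.Nonempty := (Finsupp.support_nonempty_iff.mpr ha).image _
    have hmemT : ∀ i : Fin n, i ∈ T ↔ ∃ j, a (i, j) ≠ 0 := by
      intro i
      simp only [hTdef, Finset.mem_image, Finsupp.mem_support_iff]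
      constructor
      · rintro ⟨⟨i', j⟩, hq, rfl⟩
        exact ⟨j, hq⟩
      · rintro ⟨j, hj⟩
        exact ⟨(i, j), hj, rfl⟩
    have hrows : ∀ S : Finset (Fin n), (∀ i j, a (i, j) ≠ 0 → i ∈ S) ↔ T ⊆ S := by
      intro S
      constructor
      · intro h x hx
        obtain ⟨j, hj⟩ := (hmemT x).mp hx
        exact h x j hj
      · intro h i j hij
        exact h ((hmemT i).mpr ⟨j, hij⟩)
    have hterm : ∀ S ∈ Finset.univ.powerset.filter (fun S : Finset (Fin n) => S.Nonempty),
        ((-1 : F) ^ (n - S.card)) * (if (∀ i j, a (i, j) ≠ 0 → i ∈ S)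
            then coeff (colsum a) f * ∏ j, (Nat.multinomial S (fun i => a (i, j)) : F) else 0)
        = (if T ⊆ S then ((-1 : F) ^ (n - S.card)) else 0)
            * (coeff (colsum a) f * ∏ j, (Nat.multinomial Finset.univ (fun i => a (i, j)) : F)) := by
      intro S _
      by_cases hTS : T ⊆ S
      · rw [if_pos hTS, if_pos ((hrows S).mpr hTS)]
        have hmult : ∀ j : Fin d, Nat.multinomial S (fun i => a (i, j))
            = Nat.multinomial Finset.univ (fun i => a (i, j)) := fun j =>
          multinomial_subset (Finset.subset_univ S) _ fun i _ hiS =>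
            not_imp_comm.mp (fun hne => hTS ((hmemT i).mpr ⟨j, hne⟩)) hiS
        rw [Finset.prod_congr rfl fun j _ => congrArg _ (hmult j)]
      · rw [if_neg hTS, if_neg (fun h => hTS ((hrows S).mp h)), mul_zero, zero_mul]
    rw [Finset.sum_congr rfl hterm, ← Finset.sum_mul, defect_sign_sum hT]
    have hcond : (∀ i : Fin n, ∃ j, a (i, j) ≠ 0) ↔ T = Finset.univ := by
      rw [Finset.eq_univ_iff_forall]
      exact forall_congr' fun i => (hmemT i).symm
    by_cases hu : T = Finset.univ
    · rw [if_pos hu, if_pos (hcond.mpr hu), one_mul]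
    · rw [if_neg hu, if_neg (fun h => hu (hcond.mp h)), zero_mul]

end PolyHelpers
end Helpers

/-- for a nonzero polynomial `f` with `f(0) = 0` over a field of
characteristic `p` (prime or zero), the formal combinatorial degree of `f`, i.e. the `N`
with `Δ^N f ≠ 0` and `Δ^{N+1} f = 0`, equals `deg_p f`. -/
theorem formal_combinatorial_degree_eq_pDeg
    {F : Type*} [Field F] {p : ℕ} [CharP F p] (hp : p.Prime ∨ p = 0)
    {d : ℕ} (f : MvPolynomial (Fin d) F) (hf : f ≠ 0)
    (h0 : MvPolynomial.constantCoeff f = 0)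
    (N : ℕ) (hN : N = pDeg p f) :
    polDefect N f ≠ 0 ∧ polDefect (N + 1) f = 0 := by
  constructor
  · -- nonvanishing at N
    obtain ⟨m, hm_mem, hm_sup⟩ := Finset.exists_mem_eq_sup f.support
      (Finset.nonempty_iff_ne_empty.mpr (mt MvPolynomial.support_eq_empty.mp hf)) (fun m : Fin d →₀ ℕ => ∑ j, pWeight p (m j))
    have hN' : N = ∑ j, pWeight p (m j) := by rw [hN, pDeg]; exact hm_sup
    obtain ⟨a, ha1, ha2, ha3⟩ := exists_witness hp m hN'
    intro hzero
    have hc := coeff_polDefect f h0 a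
    rw [hzero, MvPolynomial.coeff_zero, if_pos ha1] at hc
    have hcol : colsum a = m := by
      ext j; rw [colsum_apply]; exact ha2 j
    rw [hcol] at hc
    have hcm : MvPolynomial.coeff m f ≠ 0 := MvPolynomial.mem_support_iff.mp hm_mem
    have hprod : (∏ j, (Nat.multinomial Finset.univ (fun i => a (i, j)) : F)) ≠ 0 := by
      refine Finset.prod_ne_zero_iff.mpr fun j _ => ?_
      rw [cast_multinomial_ne_zero_iff hp]
      rw [ha2 j]
      exact ha3 j
    exact (mul_ne_zero hcm hprod) hc.symm
  · -- vanishing at N + 1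
    apply MvPolynomial.ext
    intro a
    rw [coeff_polDefect f h0 a, MvPolynomial.coeff_zero]
    split_ifs with hcond
    · by_contra hne
      obtain ⟨hcm, hprod⟩ := mul_ne_zero_iff.mp hne
      have hsupp : colsum a ∈ f.support := MvPolynomial.mem_support_iff.mpr hcm
      have hle : ∑ j, pWeight p (colsum a j) ≤ pDeg p f :=
        Finset.le_sup (f := fun m : Fin d →₀ ℕ => ∑ j, pWeight p (m j)) hsupp
      have hcols : ∀ j, (∑ i, pWeight p (a (i, j))) = pWeight p (colsum a j) := by
        intro j
        rw [colsum_apply]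
        exact (cast_multinomial_ne_zero_iff hp _ _).mp
          (Finset.prod_ne_zero_iff.mp hprod j (Finset.mem_univ j))
      have hrow : ∀ i : Fin (N + 1), 1 ≤ ∑ j, pWeight p (a (i, j)) := by
        intro i
        obtain ⟨j, hj⟩ := hcond i
        calc 1 ≤ pWeight p (a (i, j)) := pWeight_pos hj
          _ ≤ ∑ j, pWeight p (a (i, j)) :=
            Finset.single_le_sum (f := fun j' => pWeight p (a (i, j')))
              (fun _ _ => Nat.zero_le _) (Finset.mem_univ j)
      have hbig : (N + 1) ≤ ∑ i : Fin (N + 1), ∑ j, pWeight p (a (i, j)) := by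
        calc (N + 1) = ∑ _i : Fin (N + 1), 1 := by simp
          _ ≤ _ := Finset.sum_le_sum fun i _ => hrow i
      rw [Finset.sum_comm, Finset.sum_congr rfl fun j _ => hcols j] at hbig
      omega
    · rfl
end

section
/- Let F be a field of characteristic p (where p is a prime or p = 0), let V be a finite-dimensional F-vector space with basis {e_1,…,e_d}, and let φ : V^n → F be a characteristic symmetric n-linear form. Define α : V → F by α(Σ_i a_i e_i) = Σ (a_1^{t_1}⋯a_d^{t_d})/(t_1!⋯t_d!) · φ(e_1 repeated t_1 times, …, e_d repeated t_d times), the sum ranging over all (t_1,…,t_d) with t_1+⋯+t_d = n and 0 ≤ t_i < p for all i (no upper bound on the t_i when p = 0); note that each t_i! is invertible in F since t_i < p. Then Δ^n α = φ. Moreover, with respect to this basis α is given by a homogeneous polynomial of degree n all of whose exponents are less than p. -/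
open MvPolynomial Finset

/-- The `n`-th defect of a function `α : V → F`:
`Δ^n α(u_1,…,u_n) = Σ_{∅ ≠ S ⊆ {1,…,n}} (−1)^{n−|S|} α(Σ_{i∈S} u_i)`. -/
def fnDefect {F V : Type*} [Field F] [AddCommGroup V] (α : V → F) (n : ℕ)
    (u : Fin n → V) : F :=
  ∑ S ∈ Finset.univ.powerset.filter (fun S : Finset (Fin n) => S.Nonempty),
    (-1 : F) ^ (n - S.card) * α (∑ i ∈ S, u i)

/-- The tuple `(e_1 repeated t_1 times, e_2 repeated t_2 times, …, e_d repeated t_d times)`,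
viewed as a function `Fin n → V` (where `n = t_1 + ⋯ + t_d` is intended). -/
def repVec {V : Type*} [Zero V] {d : ℕ} (e : Fin d → V) (t : Fin d → ℕ) (n : ℕ) :
    Fin n → V :=
  fun i => ((List.ofFn fun j => List.replicate (t j) (e j)).flatten).getD (i : ℕ) 0

variable {n d : ℕ}

def listFun (l : List (Fin d)) (hl : l.length = n) : Fin n → Fin d :=
  fun i => l.get (Fin.cast hl.symm i)

lemma ofFn_listFun (l : List (Fin d)) (hl : l.length = n) :
    List.ofFn (listFun l hl) = l := by
  subst hl
  have : listFun l rfl = l.get := funext fun i => by simp [listFun, Fin.cast]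
  rw [this, List.ofFn_get]

lemma fib_listFun (l : List (Fin d)) (hl : l.length = n) (j : Fin d) :
    (Finset.univ.filter fun i => listFun l hl i = j).card = l.count j := by
  have h1 : (l : Multiset (Fin d)) = Multiset.map (listFun l hl) Finset.univ.val := by
    rw [Fin.univ_val_map, ofFn_listFun]
  rw [← Multiset.coe_count, h1, Multiset.count_map, ← Multiset.countP_eq_card_filter]
  rw [Finset.card, Finset.filter_val, ← Multiset.countP_eq_card_filter]
  exact Multiset.countP_congr rfl fun x _ => by simp [eq_comm]


lemma exists_perm_comp (g h : Fin n → Fin d)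
    (H : ∀ j, (Finset.univ.filter fun i => g i = j).card
        = (Finset.univ.filter fun i => h i = j).card) :
    ∃ σ : Equiv.Perm (Fin n), g ∘ σ = h := by
  have e : ∀ j, {i // h i = j} ≃ {i // g i = j} := fun j =>
    Fintype.equivOfCardEq (by simp only [Fintype.card_subtype]; exact (H j).symm)
  refine ⟨(Equiv.sigmaFiberEquiv h).symm.trans
    ((Equiv.sigmaCongrRight e).trans (Equiv.sigmaFiberEquiv g)), ?_⟩
  funext i
  simp only [Function.comp_apply, Equiv.trans_apply, Equiv.sigmaFiberEquiv,
    Equiv.sigmaCongrRight, Equiv.coe_fn_symm_mk, Equiv.coe_fn_mk]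
  exact (e (h i) ⟨i, rfl⟩).2

lemma fib_comp_perm (g : Fin n → Fin d) (σ : Equiv.Perm (Fin n)) (j : Fin d) :
    (Finset.univ.filter fun i => g (σ i) = j).card
      = (Finset.univ.filter fun i => g i = j).card :=
  Finset.card_equiv σ (by simp)

def idxList (t : Fin d → ℕ) : List (Fin d) :=
  (List.ofFn fun j => List.replicate (t j) j).flatten

lemma length_idxList (t : Fin d → ℕ) : (idxList t).length = ∑ j, t j := by
  simp [idxList, List.map_ofFn, List.sum_ofFn, Function.comp_def]

lemma count_idxList (t : Fin d → ℕ) (j : Fin d) : (idxList t).count j = t j := by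
  simp [idxList, List.count_flatten, List.map_ofFn, List.sum_ofFn, Function.comp_def,
    List.count_replicate]

lemma repVec_eq {V : Type*} [Zero V] (e : Fin d → V) (t : Fin d → ℕ)
    (hl : (idxList t).length = n) :
    repVec e t n = e ∘ listFun (idxList t) hl := by
  have hmap : (List.ofFn fun j => List.replicate (t j) (e j)).flatten = (idxList t).map e := by
    simp [idxList, List.map_ofFn, Function.comp_def]
  funext i
  have hi : (i : ℕ) < ((idxList t).map e).length := by
    simpa [hl] using i.2
  simp only [repVec, hmap, Function.comp_apply, listFun]
  rw [List.getD_eq_getElem _ _ hi, List.getElem_map]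
  rfl

section signs
variable {F : Type*} [Field F]

lemma sum_powerset_neg_one (x : Finset (Fin n)) :
    ∑ S ∈ x.powerset, (-1 : F) ^ S.card = if x = ∅ then 1 else 0 := by
  have h := Finset.sum_powerset_neg_one_pow_card (x := x)
  have h2 : ((∑ m ∈ x.powerset, (-1 : ℤ) ^ m.card : ℤ) : F)
      = ∑ S ∈ x.powerset, (-1 : F) ^ S.card := by push_cast; rfl
  rw [← h2, h]
  split <;> simp

lemma neg_one_pow_sub (m k : ℕ) (hk : k ≤ m) :
    (-1 : F) ^ (m - k) = (-1 : F) ^ m * (-1 : F) ^ k := by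
  have : m + k = (m - k) + 2 * k := by omega
  have h2 : (-1 : F) ^ (m + k) = (-1 : F) ^ (m - k) := by
    rw [this, pow_add, pow_mul, neg_one_sq, one_pow, mul_one]
  rw [← h2, pow_add]

lemma sum_superset_sign (R : Finset (Fin n)) :
    ∑ S ∈ (Finset.univ : Finset (Fin n)).powerset,
      (if R ⊆ S then (-1 : F) ^ (n - S.card) else 0)
      = if R = Finset.univ then 1 else 0 := by
  rw [← Finset.sum_filter]
  have key : ∑ S ∈ (Finset.univ : Finset (Fin n)).powerset.filter (fun S => R ⊆ S),
      (-1 : F) ^ (n - S.card)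
      = ∑ T ∈ Rᶜ.powerset, (-1 : F) ^ (n - (T ∪ R).card) := by
    refine Finset.sum_nbij' (fun S => S \ R) (fun T => T ∪ R) ?_ ?_ ?_ ?_ ?_
    · intro S hS
      simp only [Finset.mem_filter, Finset.mem_powerset] at hS
      simp only [Finset.mem_powerset]
      intro x hx
      simp only [Finset.mem_sdiff] at hx
      simp [Finset.mem_compl, hx.2]
    · intro T hT
      simp only [Finset.mem_powerset] at hT
      simp [Finset.mem_filter, Finset.mem_powerset]
    · intro S hS
      simp only [Finset.mem_filter, Finset.mem_powerset] at hS
      exact Finset.sdiff_union_of_subset hS.2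
    · intro T hT
      simp only [Finset.mem_powerset] at hT
      have hd : Disjoint T R := by
        rw [Finset.disjoint_right]
        intro x hxR hxT
        exact (Finset.mem_compl.mp (hT hxT)) hxR
      exact Finset.union_sdiff_cancel_right hd
    · intro S hS
      simp only [Finset.mem_filter, Finset.mem_powerset] at hS
      rw [Finset.sdiff_union_of_subset hS.2]
  rw [key]
  have hcard : ∀ T ∈ Rᶜ.powerset, (-1 : F) ^ (n - (T ∪ R).card)
      = (-1 : F) ^ Rᶜ.card * (-1 : F) ^ T.card := by
    intro T hT
    simp only [Finset.mem_powerset] at hT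
    have hd : Disjoint T R := by
      rw [Finset.disjoint_right]
      intro x hxR hxT
      exact (Finset.mem_compl.mp (hT hxT)) hxR
    have hTR : (T ∪ R).card = T.card + R.card := Finset.card_union_of_disjoint hd
    have hc : Rᶜ.card = n - R.card := by
      rw [Finset.card_compl]; simp
    have hRn : R.card ≤ n := by
      simpa using Finset.card_le_card (Finset.subset_univ R)
    have hTc : T.card ≤ Rᶜ.card := Finset.card_le_card hT
    have : n - (T ∪ R).card = Rᶜ.card - T.card := by omega
    rw [this, neg_one_pow_sub _ _ hTc]
  rw [Finset.sum_congr rfl hcard, ← Finset.mul_sum, sum_powerset_neg_one]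
  by_cases hR : R = Finset.univ
  · simp [hR]
  · have : Rᶜ ≠ ∅ := by
      simp only [ne_eq, ← Finset.compl_eq_empty_iff]
      simpa using hR
    simp [hR, this]

end signs

section permsum
variable {M : Type*} [AddCommMonoid M]

lemma card_comp_eq_fiber (c g : Fin n → Fin d) (σ₀ : Equiv.Perm (Fin n))
    (h₀ : c ∘ σ₀ = g) :
    (Finset.univ.filter fun σ : Equiv.Perm (Fin n) => c ∘ ⇑σ = g).card
      = ∏ j, ((Finset.univ.filter fun i => c i = j).card).factorial := by
  have hcard : (Finset.univ.filter fun σ : Equiv.Perm (Fin n) => c ∘ ⇑σ = g).card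
      = (Finset.univ.filter fun τ : Equiv.Perm (Fin n) => c ∘ ⇑τ = c).card := by
    refine (Finset.card_equiv (Equiv.mulRight σ₀) ?_).symm
    intro τ
    simp only [Finset.mem_filter, Finset.mem_univ, true_and, Equiv.coe_mulRight]
    constructor
    · intro h
      funext x
      have h1 := congrFun h (σ₀ x)
      have h2 := congrFun h₀ x
      simp only [Function.comp_apply, Equiv.Perm.mul_apply] at h1 h2 ⊢
      rw [h1, h2]
    · intro h
      funext y
      have h1 := congrFun h (σ₀⁻¹ y)
      have h2 := congrFun h₀ (σ₀⁻¹ y)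
      simp only [Function.comp_apply, Equiv.Perm.mul_apply, Equiv.Perm.coe_inv, Equiv.apply_symm_apply] at h1 h2 ⊢
      rw [h1, ← h2]
  rw [hcard, ← Fintype.card_subtype]
  rw [DomMulAct.stabilizer_card c]
  exact Finset.prod_congr rfl fun j _ => by rw [Fintype.card_subtype]

lemma image_comp_perm (c : Fin n → Fin d) :
    (Finset.univ : Finset (Equiv.Perm (Fin n))).image (fun σ : Equiv.Perm (Fin n) => c ∘ ⇑σ)
      = Finset.univ.filter (fun g : Fin n → Fin d => ∀ j,
          (Finset.univ.filter fun i => g i = j).card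
            = (Finset.univ.filter fun i => c i = j).card) := by
  ext g
  simp only [Finset.mem_image, Finset.mem_filter, Finset.mem_univ, true_and]
  constructor
  · rintro ⟨σ, rfl⟩
    intro j
    exact fib_comp_perm c σ j
  · intro H
    obtain ⟨σ, hσ⟩ := exists_perm_comp c g fun j => (H j).symm
    exact ⟨σ, hσ⟩

lemma sum_perm_comp (c : Fin n → Fin d) (G : (Fin n → Fin d) → M) :
    ∑ σ : Equiv.Perm (Fin n), G (c ∘ ⇑σ)
      = ∑ g ∈ Finset.univ.filter (fun g : Fin n → Fin d => ∀ j,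
          (Finset.univ.filter fun i => g i = j).card
            = (Finset.univ.filter fun i => c i = j).card),
          (∏ j, ((Finset.univ.filter fun i => c i = j).card).factorial) • G g := by
  rw [Finset.sum_comp G (fun σ : Equiv.Perm (Fin n) => c ∘ ⇑σ), image_comp_perm]
  refine Finset.sum_congr rfl fun g hg => ?_
  simp only [Finset.mem_filter, Finset.mem_univ, true_and] at hg
  obtain ⟨σ₀, hσ₀⟩ := exists_perm_comp c g fun j => (hg j).symm
  rw [card_comp_eq_fiber c g σ₀ hσ₀]

end permsum

section key
variable {F : Type*} [Field F]

lemma prod_pow_fib (c : Fin n → Fin d) (x : Fin d → F) :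
    ∏ j, x j ^ (Finset.univ.filter fun i => c i = j).card = ∏ k, x (c k) := by
  rw [Finset.prod_comp x c]
  refine (Finset.prod_subset (Finset.subset_univ _) ?_).symm
  intro j _ hj
  have : (Finset.univ.filter fun i => c i = j).card = 0 := by
    rw [Finset.card_eq_zero, Finset.filter_eq_empty_iff]
    intro i _
    exact fun h => hj (Finset.mem_image.mpr ⟨i, Finset.mem_univ _, h⟩)
  rw [this, pow_zero]

lemma key_identity (a : Fin n → Fin d → F) (c : Fin n → Fin d) :
    ∑ S ∈ (Finset.univ : Finset (Fin n)).powerset,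
      (-1 : F) ^ (n - S.card) * ∏ j, (∑ i ∈ S, a i j) ^ (Finset.univ.filter fun i => c i = j).card
    = ((∏ j, ((Finset.univ.filter fun i => c i = j).card).factorial : ℕ) : F) *
        ∑ g ∈ Finset.univ.filter (fun g : Fin n → Fin d => ∀ j,
          (Finset.univ.filter fun i => g i = j).card
            = (Finset.univ.filter fun i => c i = j).card),
          ∏ i, a i (g i) := by
  classical
  -- step 1 and 2 : expand the product
  have step12 : ∀ S : Finset (Fin n),
      ∏ j, (∑ i ∈ S, a i j) ^ (Finset.univ.filter fun i => c i = j).card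
        = ∑ r : Fin n → Fin n, if (∀ k, r k ∈ S) then ∏ k, a (r k) (c k) else 0 := by
    intro S
    rw [prod_pow_fib c (fun j => ∑ i ∈ S, a i j)]
    rw [Finset.prod_univ_sum (fun _ => S) (fun k i => a i (c k))]
    have hset : Fintype.piFinset (fun _ : Fin n => S)
        = Finset.univ.filter (fun r : Fin n → Fin n => ∀ k, r k ∈ S) := by
      ext r
      simp [Fintype.mem_piFinset]
    rw [hset, Finset.sum_filter]
  simp_rw [step12, Finset.mul_sum]
  rw [Finset.sum_comm]
  -- step 5 : inner sign sums
  have step5 : ∀ r : Fin n → Fin n,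
      ∑ S ∈ (Finset.univ : Finset (Fin n)).powerset,
        ((-1 : F) ^ (n - S.card) * if (∀ k, r k ∈ S) then ∏ k, a (r k) (c k) else 0)
      = (if Finset.univ.image r = Finset.univ then 1 else 0) * ∏ k, a (r k) (c k) := by
    intro r
    have : ∀ S ∈ (Finset.univ : Finset (Fin n)).powerset,
        ((-1 : F) ^ (n - S.card) * if (∀ k, r k ∈ S) then ∏ k, a (r k) (c k) else 0)
        = (if Finset.univ.image r ⊆ S then (-1 : F) ^ (n - S.card) else 0)
            * ∏ k, a (r k) (c k) := by
      intro S _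
      have hc : (∀ k, r k ∈ S) ↔ Finset.univ.image r ⊆ S := by
        rw [Finset.image_subset_iff]
        simp
      rw [mul_ite, mul_zero, ite_mul, zero_mul]
      exact if_congr hc rfl rfl
    rw [Finset.sum_congr rfl this, ← Finset.sum_mul, sum_superset_sign]
  rw [Finset.sum_congr rfl (fun r _ => step5 r)]
  -- step 6 : only bijections survive
  simp_rw [ite_mul, one_mul, zero_mul]
  rw [← Finset.sum_filter]
  have hbij : Finset.univ.filter (fun r : Fin n → Fin n => Finset.univ.image r = Finset.univ)
      = Finset.univ.filter (fun r : Fin n → Fin n => Function.Bijective r) := by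
    ext r
    simp only [Finset.mem_filter, Finset.mem_univ, true_and]
    constructor
    · intro h
      have hsurj : Function.Surjective r := by
        intro y
        have : y ∈ Finset.univ.image r := by rw [h]; exact Finset.mem_univ _
        obtain ⟨x, -, hx⟩ := Finset.mem_image.mp this
        exact ⟨x, hx⟩
      exact Finite.surjective_iff_bijective.mp hsurj
    · intro h
      apply Finset.eq_univ_of_forall
      intro y
      obtain ⟨x, hx⟩ := h.2 y
      exact Finset.mem_image.mpr ⟨x, Finset.mem_univ _, hx⟩
  rw [hbij]
  -- step 7 : sum over bijections = sum over permutations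
  have step7 : ∑ r ∈ Finset.univ.filter (fun r : Fin n → Fin n => Function.Bijective r),
      ∏ k, a (r k) (c k) = ∑ σ : Equiv.Perm (Fin n), ∏ k, a (σ k) (c k) := by
    refine (Finset.sum_bij (fun (σ : Equiv.Perm (Fin n)) _ => ⇑σ) ?_ ?_ ?_ ?_).symm
    · intro σ _
      exact Finset.mem_filter.mpr ⟨Finset.mem_univ _, σ.bijective⟩
    · intro σ₁ _ σ₂ _ h
      exact Equiv.coe_fn_injective h
    · intro r hr
      simp only [Finset.mem_filter, Finset.mem_univ, true_and] at hr
      exact ⟨Equiv.ofBijective r hr, Finset.mem_univ _, rfl⟩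
    · intro σ _
      rfl
  rw [step7]
  -- step 8 : reindex and count
  have step8a : ∀ σ : Equiv.Perm (Fin n),
      ∏ k, a (σ k) (c k) = ∏ i, a i (c (σ⁻¹ i)) := by
    intro σ
    rw [← Equiv.prod_comp σ (fun i => a i (c (σ⁻¹ i)))]
    refine Finset.prod_congr rfl fun k _ => ?_
    simp
  rw [Finset.sum_congr rfl (fun σ _ => step8a σ)]
  have step8b : ∑ σ : Equiv.Perm (Fin n), ∏ i, a i (c (σ⁻¹ i))
      = ∑ σ : Equiv.Perm (Fin n), ∏ i, a i ((c ∘ ⇑σ) i) := by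
    refine Finset.sum_equiv (Equiv.inv (Equiv.Perm (Fin n))) (by simp) ?_
    intro σ _
    rfl
  rw [step8b, sum_perm_comp c (fun g => ∏ i, a i (g i))]
  refine Finset.sum_congr rfl fun g _ => ?_
  rw [nsmul_eq_mul]
end key

lemma exists_good_rep (t : Fin d → ℕ) (j0 : Fin d) (hsum : ∑ j, t j = n) :
    ∃ h : Fin n → Fin d, (∀ j, (Finset.univ.filter fun i => h i = j).card = t j) ∧
      ∀ i : Fin n, (i : ℕ) < t j0 → h i = j0 := by
  classical
  have htn : t j0 ≤ n := by
    rw [← hsum]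
    exact Finset.single_le_sum (fun j _ => Nat.zero_le _) (Finset.mem_univ j0)
  have hupd : ∑ j, Function.update t j0 0 j = n - t j0 := by
    have h1 := Finset.sum_update_of_mem (Finset.mem_univ j0) t 0
    rw [h1]
    have h3 : t j0 + ∑ x ∈ Finset.univ \ {j0}, t x = n := by
      rw [Finset.sdiff_singleton_eq_erase, Finset.add_sum_erase _ t (Finset.mem_univ j0), hsum]
    omega
  have hlen : (List.replicate (t j0) j0 ++ idxList (Function.update t j0 0)).length = n := by
    rw [List.length_append, List.length_replicate, length_idxList, hupd]
    omega
  refine ⟨listFun _ hlen, fun j => ?_, fun i hi => ?_⟩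
  · rw [fib_listFun, List.count_append, List.count_replicate, count_idxList]
    by_cases hj : j = j0
    · subst hj
      simp
    · rw [Function.update_of_ne hj]
      simp [show ¬ (j0 == j) = true by simpa using Ne.symm hj]
  · have hi' : (i : ℕ) < (List.replicate (t j0) j0).length := by
      rw [List.length_replicate]
      omega
    simp only [listFun, List.get_eq_getElem]
    have hi'' : ((Fin.cast hlen.symm i) : ℕ) < (List.replicate (t j0) j0).length := hi'
    rw [List.getElem_append_left hi'', List.getElem_replicate]

/-- if `φ : V^n → F` is a characteristic symmetric `n`-linear form on a
`d`-dimensional space `V` with basis `e_1,…,e_d`, then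
`α(Σ a_i e_i) = Σ_{t_1+⋯+t_d = n, 0 ≤ t_i < p} (a_1^{t_1}⋯a_d^{t_d})/(t_1!⋯t_d!) ·
φ(t_1*e_1,…,t_d*e_d)` satisfies `Δ^n α = φ`, and `α` is given, with respect to this basis,
by a homogeneous polynomial of degree `n` all of whose exponents are less than `p`. -/
theorem realization_of_characteristic_nlinear_form
    {F V : Type*} [Field F] [AddCommGroup V] [Module F V]
    {p : ℕ} [CharP F p] {d n : ℕ} (hn : 1 ≤ n)
    (B : Module.Basis (Fin d) F V)
    (φ : MultilinearMap F (fun _ : Fin n => V) F)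
    (hsym : ∀ (w : Fin n → V) (σ : Equiv.Perm (Fin n)), φ (w ∘ σ) = φ w)
    (hchar : p ≠ 0 → p ≤ n → ∀ (u : V) (w : Fin n → V),
      (∀ i : Fin n, (i : ℕ) < p → w i = u) → φ w = 0)
    (α : V → F)
    (hα : ∀ v : V, α v =
      ∑ t ∈ (Finset.Nat.antidiagonalTuple d n).filter
          (fun t => ∀ j, p = 0 ∨ t j < p),
        (∏ j, (B.repr v j) ^ (t j) * (((t j).factorial : F))⁻¹) *
          φ (repVec (fun j => B j) t n)) :
    (∀ u : Fin n → V, fnDefect α n u = φ u) ∧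
    ∃ f : MvPolynomial (Fin d) F, f.IsHomogeneous n ∧
      (∀ m ∈ f.support, ∀ j, p = 0 ∨ m j < p) ∧
      (∀ a : Fin d → F, α (∑ j, a j • B j) = MvPolynomial.eval a f) := by
  classical
  have hd0 : ∀ t ∈ Finset.Nat.antidiagonalTuple d n, ∑ j, t j = n :=
    fun t ht => Finset.Nat.mem_antidiagonalTuple.mp ht
  -- factorials are invertible for admissible tuples
  have hfact : ∀ t ∈ (Finset.Nat.antidiagonalTuple d n).filter
      (fun t => ∀ j, p = 0 ∨ t j < p), ∀ j, ((t j).factorial : F) ≠ 0 := by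
    intro t ht j
    rw [Finset.mem_filter] at ht
    rcases CharP.char_is_prime_or_zero F p with hp | hp
    · have htj : t j < p := by
        rcases ht.2 j with h | h
        · exact absurd h hp.ne_zero
        · exact h
      rw [Ne, CharP.cast_eq_zero_iff F p, hp.dvd_factorial]
      omega
    · subst hp
      haveI : CharZero F := CharP.charP_to_charZero F
      exact Nat.cast_ne_zero.mpr (t j).factorial_ne_zero
  -- canonical representative of each fiber class
  have hcex : ∀ t ∈ Finset.Nat.antidiagonalTuple d n, ∃ c : Fin n → Fin d,
      (∀ j, (Finset.univ.filter fun i => c i = j).card = t j) ∧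
      repVec (fun j => B j) t n = fun i => B (c i) := by
    intro t ht
    have hlen : (idxList t).length = n := by rw [length_idxList]; exact hd0 t ht
    refine ⟨listFun (idxList t) hlen, fun j => ?_, ?_⟩
    · rw [fib_listFun]; exact count_idxList t j
    · exact repVec_eq (fun j => B j) t hlen
  -- φ only depends on the fiber class
  have hclass : ∀ t ∈ Finset.Nat.antidiagonalTuple d n, ∀ g : Fin n → Fin d,
      (∀ j, (Finset.univ.filter fun i => g i = j).card = t j) →
      φ (fun i => B (g i)) = φ (repVec (fun j => B j) t n) := by
    intro t ht g hg
    obtain ⟨c, hc1, hc2⟩ := hcex t ht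
    obtain ⟨σ, hσ⟩ := exists_perm_comp c g (fun j => by rw [hc1 j, hg j])
    rw [hc2]
    have hcg : (fun i => B (g i)) = (fun i => B (c i)) ∘ ⇑σ := by
      funext i
      simp [← congrFun hσ i]
    rw [hcg]
    exact hsym _ σ
  -- φ vanishes on classes with a fiber of size ≥ p
  have hvanish : ∀ (g : Fin n → Fin d) (j0 : Fin d), p ≠ 0 →
      p ≤ (Finset.univ.filter fun i => g i = j0).card → φ (fun i => B (g i)) = 0 := by
    intro g j0 hp hple
    have hsum : ∑ j, (Finset.univ.filter fun i => g i = j).card = n := by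
      have h1 := Finset.card_eq_sum_card_fiberwise
        (f := g) (s := Finset.univ) (t := Finset.univ) (fun x _ => Finset.mem_univ _)
      simpa using h1.symm
    obtain ⟨h, hh1, hh2⟩ := exists_good_rep
      (fun j => (Finset.univ.filter fun i => g i = j).card) j0 hsum
    obtain ⟨σ, hσ⟩ := exists_perm_comp g h (fun j => (hh1 j).symm)
    have hφeq : φ (fun i => B (g i)) = φ (fun i => B (h i)) := by
      have hcg : (fun i => B (h i)) = (fun i => B (g i)) ∘ ⇑σ := by
        funext i
        simp [← congrFun hσ i]
      rw [hcg, hsym]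
    have hpn : p ≤ n := le_trans hple
      (by simpa using Finset.card_filter_le Finset.univ (fun i => g i = j0))
    rw [hφeq]
    exact hchar hp hpn (B j0) _ (fun i hip => by rw [hh2 i (lt_of_lt_of_le hip hple)])
  constructor
  · -- Part 1 : the defect of α is φ
    intro u
    have hα0 : α 0 = 0 := by
      rw [hα 0]
      refine Finset.sum_eq_zero fun t ht => ?_
      rw [Finset.mem_filter] at ht
      have hex : ∃ j, t j ≠ 0 := by
        by_contra hc
        push_neg at hc
        have h1 := hd0 t ht.1
        rw [Finset.sum_congr rfl (fun j _ => hc j)] at h1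
        simp at h1
        omega
      obtain ⟨j, hj⟩ := hex
      have hz : (B.repr 0 j : F) ^ t j * ((t j).factorial : F)⁻¹ = 0 := by
        simp [zero_pow hj]
      rw [Finset.prod_eq_zero (Finset.mem_univ j) hz, zero_mul]
    have hL1 : fnDefect α n u
        = ∑ S ∈ (Finset.univ : Finset (Fin n)).powerset,
            (-1 : F) ^ (n - S.card) * α (∑ i ∈ S, u i) := by
      rw [fnDefect]
      have hfe : Finset.univ.powerset.filter (fun S : Finset (Fin n) => S.Nonempty)
          = Finset.univ.powerset.erase ∅ := by
        ext S
        simp [Finset.nonempty_iff_ne_empty, and_comm]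
      rw [hfe]
      refine Finset.sum_erase _ ?_
      simp [hα0]
    have hrepr : ∀ S : Finset (Fin n), ∀ j, B.repr (∑ i ∈ S, u i) j
        = ∑ i ∈ S, B.repr (u i) j := by
      intro S j
      rw [map_sum, Finset.sum_apply']
    -- left hand side computation
    have hL : fnDefect α n u
        = ∑ t ∈ (Finset.Nat.antidiagonalTuple d n).filter (fun t => ∀ j, p = 0 ∨ t j < p),
            (∑ g ∈ Finset.univ.filter (fun g : Fin n → Fin d => ∀ j,
              (Finset.univ.filter fun i => g i = j).card = t j),
              ∏ i, B.repr (u i) (g i)) * φ (repVec (fun j => B j) t n) := by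
      rw [hL1]
      simp_rw [hα, hrepr, Finset.mul_sum]
      rw [Finset.sum_comm]
      refine Finset.sum_congr rfl fun t ht => ?_
      have ht' := Finset.mem_filter.mp ht
      obtain ⟨c, hc1, hc2⟩ := hcex t ht'.1
      have hki := key_identity (fun i j => B.repr (u i) j) c
      simp only [hc1] at hki
      calc ∑ S ∈ (Finset.univ : Finset (Fin n)).powerset, (-1 : F) ^ (n - S.card) *
              ((∏ j, (∑ i ∈ S, B.repr (u i) j) ^ t j * ((t j).factorial : F)⁻¹) *
                φ (repVec (fun j => B j) t n))
          = (∑ S ∈ (Finset.univ : Finset (Fin n)).powerset, (-1 : F) ^ (n - S.card) *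
              ∏ j, (∑ i ∈ S, B.repr (u i) j) ^ t j) *
              ((∏ j, ((t j).factorial : F)⁻¹) * φ (repVec (fun j => B j) t n)) := by
            rw [Finset.sum_mul]
            refine Finset.sum_congr rfl fun S _ => ?_
            rw [Finset.prod_mul_distrib]
            ring
        _ = _ := by
            rw [hki]
            have hone : (∏ j, ((t j).factorial : F)⁻¹)
                * ((∏ j, (t j).factorial : ℕ) : F) = 1 := by
              rw [Nat.cast_prod, ← Finset.prod_mul_distrib]
              rw [Finset.prod_congr rfl (fun j _ => inv_mul_cancel₀ (hfact t ht j))]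
              exact Finset.prod_const_one
            linear_combination (∑ g ∈ Finset.univ.filter (fun g : Fin n → Fin d => ∀ j,
              (Finset.univ.filter fun i => g i = j).card = t j),
              ∏ i, B.repr (u i) (g i)) * φ (repVec (fun j => B j) t n) * hone
    -- right hand side computation
    have hmaps : ∀ r : Fin n → Fin d, (fun j => (Finset.univ.filter fun i => r i = j).card)
        ∈ Finset.Nat.antidiagonalTuple d n := by
      intro r
      rw [Finset.Nat.mem_antidiagonalTuple]
      have h1 := Finset.card_eq_sum_card_fiberwise
        (f := r) (s := Finset.univ) (t := Finset.univ) (fun x _ => Finset.mem_univ _)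
      simpa using h1.symm
    have hR : φ u = ∑ t ∈ (Finset.Nat.antidiagonalTuple d n).filter
          (fun t => ∀ j, p = 0 ∨ t j < p),
        (∑ g ∈ Finset.univ.filter (fun g : Fin n → Fin d => ∀ j,
          (Finset.univ.filter fun i => g i = j).card = t j),
          ∏ i, B.repr (u i) (g i)) * φ (repVec (fun j => B j) t n) := by
      have hu : φ u = φ (fun i => ∑ j, B.repr (u i) j • B j) := by
        congr 1
        funext i
        exact (B.sum_repr (u i)).symm
      rw [hu, MultilinearMap.map_sum]
      have hsm : ∀ r : Fin n → Fin d, φ (fun i => B.repr (u i) (r i) • B (r i))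
          = (∏ i, B.repr (u i) (r i)) * φ (fun i => B (r i)) := by
        intro r
        rw [MultilinearMap.map_smul_univ, smul_eq_mul]
      rw [Finset.sum_congr rfl (fun r _ => hsm r)]
      rw [← Finset.sum_fiberwise_of_maps_to
        (g := fun r : Fin n → Fin d => fun j => (Finset.univ.filter fun i => r i = j).card)
        (t := Finset.Nat.antidiagonalTuple d n) (fun r _ => hmaps r)]
      rw [← Finset.sum_filter_add_sum_filter_not (Finset.Nat.antidiagonalTuple d n)
        (fun t => ∀ j, p = 0 ∨ t j < p)]
      have hbad : ∑ t ∈ (Finset.Nat.antidiagonalTuple d n).filter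
            (fun t => ¬ ∀ j, p = 0 ∨ t j < p),
          ∑ r ∈ Finset.univ.filter (fun r : Fin n → Fin d =>
            (fun j => (Finset.univ.filter fun i => r i = j).card) = t),
          (∏ i, B.repr (u i) (r i)) * φ (fun i => B (r i)) = 0 := by
        refine Finset.sum_eq_zero fun t ht => Finset.sum_eq_zero fun r hr => ?_
        rw [Finset.mem_filter] at ht hr
        push_neg at ht
        obtain ⟨j0, hj0⟩ := ht.2
        have hfib : (Finset.univ.filter fun i => r i = j0).card = t j0 :=
          congrFun hr.2 j0
        have hz : φ (fun i => B (r i)) = 0 := by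
          refine hvanish r j0 hj0.1 ?_
          rw [hfib]
          omega
        rw [hz, mul_zero]
      rw [hbad, add_zero]
      refine Finset.sum_congr rfl fun t ht => ?_
      rw [Finset.mem_filter] at ht
      have hfilter : Finset.univ.filter (fun r : Fin n → Fin d =>
            (fun j => (Finset.univ.filter fun i => r i = j).card) = t)
          = Finset.univ.filter (fun r : Fin n → Fin d => ∀ j,
            (Finset.univ.filter fun i => r i = j).card = t j) := by
        ext r
        simp [funext_iff]
      rw [hfilter, Finset.sum_mul]
      refine Finset.sum_congr rfl fun g hg => ?_
      rw [Finset.mem_filter] at hg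
      rw [hclass t ht.1 g hg.2]
    rw [hL, hR]
  · -- Part 2 : the polynomial
    refine ⟨∑ t ∈ (Finset.Nat.antidiagonalTuple d n).filter (fun t => ∀ j, p = 0 ∨ t j < p),
      MvPolynomial.monomial (Finsupp.equivFunOnFinite.symm t)
        ((∏ j, ((t j).factorial : F)⁻¹) * φ (repVec (fun j => B j) t n)), ?_, ?_, ?_⟩
    · refine MvPolynomial.IsHomogeneous.sum _ _ _ fun t ht => ?_
      refine MvPolynomial.isHomogeneous_monomial _ ?_
      rw [Finset.mem_filter] at ht
      have := hd0 t ht.1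
      rw [Finsupp.degree_apply]
      rw [Finset.sum_subset (Finset.subset_univ _)
        (fun x _ hx => Finsupp.notMem_support_iff.mp hx)]
      simpa using this
    · intro m hm j
      have hm' := MvPolynomial.support_sum hm
      rw [Finset.mem_biUnion] at hm'
      obtain ⟨t, ht, hmt⟩ := hm'
      rw [Finset.mem_filter] at ht
      have hsupp := MvPolynomial.support_monomial_subset hmt
      rw [Finset.mem_singleton] at hsupp
      subst hsupp
      simpa using ht.2 j
    · intro a
      have hrepa : ∀ j', B.repr (∑ j, a j • B j) j' = a j' := by
        intro j'
        rw [map_sum, Finset.sum_apply']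
        simp only [map_smul, Module.Basis.repr_self]
        simp [Finsupp.single_apply, Finsupp.smul_apply]
      rw [hα, map_sum (MvPolynomial.eval a)]
      refine Finset.sum_congr rfl fun t ht => ?_
      rw [MvPolynomial.eval_monomial]
      have hprod : ((Finsupp.equivFunOnFinite.symm t).prod fun j e => a j ^ e)
          = ∏ j, a j ^ t j := by
        rw [Finsupp.prod_pow]
        rfl
      rw [hprod]
      simp_rw [hrepa]
      rw [Finset.prod_mul_distrib]
      ring
end

section
/- Let F be a prime field 𝔽_p (p prime) or a field of characteristic 0, let f ∈ F[x_1,…,x_d] be a nonzero polynomial with f(0) = 0, and if F = 𝔽_p assume f is reduced (every exponent occurring in f is less than p). Let α : F^d → F be the evaluation function of f. Then the combinatorial degree of α equals the total degree of f. -/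
open MvPolynomial Finset

lemma neg_one_pow_sub' {R : Type*} [Monoid R] [HasDistribNeg R] {a b : ℕ} (h : b ≤ a) :
    (-1 : R) ^ (a - b) = (-1) ^ a * (-1) ^ b := by
  have h2 : ((-1 : R) ^ b) * ((-1 : R) ^ b) = 1 := by
    rw [← pow_add, Even.neg_one_pow (Even.add_self b)]
  calc (-1 : R) ^ (a - b) = (-1 : R) ^ (a - b) * (((-1:R)^b) * ((-1:R)^b)) := by rw [h2, mul_one]
    _ = ((-1:R)^(a-b) * (-1:R)^b) * (-1:R)^b := by rw [mul_assoc]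
    _ = (-1:R)^a * (-1:R)^b := by rw [← pow_add, Nat.sub_add_cancel h]

lemma sum_powerset_neg_one_pow_card_field {F : Type*} [Field F] {ι : Type*} [DecidableEq ι]
    {x : Finset ι} (h : x.Nonempty) :
    (∑ S ∈ x.powerset, (-1 : F) ^ S.card) = 0 := by
  have h1 := Finset.sum_powerset_neg_one_pow_card_of_nonempty (x := x) h
  have h2 : ((∑ S ∈ x.powerset, (-1 : ℤ) ^ S.card : ℤ) : F) = ((0:ℤ) : F) := by rw [h1]
  push_cast at h2
  simpa using h2

/-- inclusion-exclusion sandwich: sum over `I ⊆ S ⊆ univ` of `(-1)^(n-|S|)` vanishes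
when `I ≠ univ`. -/
lemma sandwich_sum_eq_zero {F : Type*} [Field F] {n : ℕ} (I : Finset (Fin n))
    (hI : I ≠ Finset.univ) :
    ∑ S ∈ Finset.univ.powerset.filter (fun S : Finset (Fin n) => I ⊆ S),
      (-1 : F) ^ (n - S.card) = 0 := by
  have key : ∑ S ∈ Finset.univ.powerset.filter (fun S : Finset (Fin n) => I ⊆ S),
      (-1 : F) ^ (n - S.card)
      = ∑ S' ∈ (Finset.univ \ I).powerset, (-1 : F) ^ (n - (S'.card + I.card)) := by
    refine Finset.sum_nbij' (fun S => S \ I) (fun S' => S' ∪ I) ?_ ?_ ?_ ?_ ?_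
    · intro S hS
      simp only [mem_filter, mem_powerset] at hS
      exact mem_powerset.2 (sdiff_subset_sdiff hS.1 (le_refl I))
    · intro S' hS'
      simp only [mem_powerset, Finset.subset_sdiff] at hS'
      simp only [mem_filter, mem_powerset]
      exact ⟨subset_univ _, subset_union_right⟩
    · intro S hS
      simp only [mem_filter, mem_powerset] at hS
      exact sdiff_union_of_subset hS.2
    · intro S' hS'
      simp only [mem_powerset, Finset.subset_sdiff] at hS'
      exact union_sdiff_cancel_right hS'.2
    · intro S hS
      simp only [mem_filter, mem_powerset] at hS
      congr 2
      rw [card_sdiff_of_subset hS.2, Nat.sub_add_cancel (card_le_card hS.2)]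
  rw [key]
  have hne : (Finset.univ \ I).Nonempty := by
    rw [Finset.sdiff_nonempty]
    intro h
    exact hI (Finset.univ_subset_iff.1 h)
  have hcard : ∀ S' ∈ (Finset.univ \ I).powerset,
      (-1 : F) ^ (n - (S'.card + I.card)) = (-1:F)^(n - I.card) * (-1:F)^S'.card := by
    intro S' hS'
    rw [mem_powerset] at hS'
    have h0 : I.card ≤ n := by
      simpa using card_le_card (subset_univ I)
    have h1 : S'.card + I.card ≤ n := by
      have := card_le_card hS'
      rw [card_sdiff_of_subset (subset_univ I), card_univ, Fintype.card_fin] at this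
      omega
    have h2 : S'.card ≤ n - I.card := by omega
    rw [show n - (S'.card + I.card) = (n - I.card) - S'.card by omega]
    exact neg_one_pow_sub' h2
  rw [Finset.sum_congr rfl hcard, ← Finset.mul_sum,
    sum_powerset_neg_one_pow_card_field hne, mul_zero]

lemma eval_bind₁' {F : Type*} [CommSemiring F] {σ τ : Type*} (x : τ → F)
    (g : σ → MvPolynomial τ F) (φ : MvPolynomial σ F) :
    eval x (bind₁ g φ) = eval (fun i => eval x (g i)) φ :=
  eval₂Hom_bind₁ _ _ _ _

lemma totalDegree_bind₁_le_one {F : Type*} [CommSemiring F] {σ τ : Type*}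
    (g : σ → MvPolynomial τ F) (hg : ∀ j, (g j).totalDegree ≤ 1)
    (φ : MvPolynomial σ F) :
    (bind₁ g φ).totalDegree ≤ φ.totalDegree := by
  conv_lhs => rw [φ.as_sum, map_sum]
  refine le_trans (totalDegree_finset_sum _ _) (Finset.sup_le ?_)
  intro m hm
  rw [bind₁_monomial]
  calc (C (coeff m φ) * ∏ i ∈ m.support, g i ^ m i).totalDegree
      ≤ (C (coeff m φ) : MvPolynomial τ F).totalDegree
        + (∏ i ∈ m.support, g i ^ m i).totalDegree := totalDegree_mul _ _
    _ = (∏ i ∈ m.support, g i ^ m i).totalDegree := by rw [totalDegree_C, zero_add]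
    _ ≤ ∑ i ∈ m.support, (g i ^ m i).totalDegree := totalDegree_finset_prod _ _
    _ ≤ ∑ i ∈ m.support, m i := by
        refine Finset.sum_le_sum fun i _ => ?_
        calc (g i ^ m i).totalDegree ≤ m i * (g i).totalDegree := totalDegree_pow _ _
          _ ≤ m i * 1 := Nat.mul_le_mul_left _ (hg i)
          _ = m i := Nat.mul_one _
    _ ≤ φ.totalDegree := le_totalDegree hm

lemma alt_sum_eval_eq_zero {F : Type*} [Field F] {d n : ℕ} (f : MvPolynomial (Fin d) F)
    (hdeg : f.totalDegree < n) (u : Fin n → Fin d → F) :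
    ∑ S ∈ (Finset.univ.powerset : Finset (Finset (Fin n))),
      (-1 : F) ^ (n - S.card) * eval (∑ i ∈ S, u i) f = 0 := by
  set G := bind₁ (fun j : Fin d => ∑ i : Fin n, (X (i, j) : MvPolynomial (Fin n × Fin d) F)) f
    with hG
  have hGdeg : G.totalDegree < n := by
    refine lt_of_le_of_lt (totalDegree_bind₁_le_one _ (fun j => ?_) f) hdeg
    refine le_trans (totalDegree_finset_sum _ _) (Finset.sup_le fun i _ => ?_)
    rw [totalDegree_X]
  have heval : ∀ S : Finset (Fin n), eval (∑ i ∈ S, u i) f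
      = eval (fun q : Fin n × Fin d => if q.1 ∈ S then u q.1 q.2 else 0) G := by
    intro S
    rw [hG, eval_bind₁']
    have hfun : (fun j : Fin d => eval (fun q : Fin n × Fin d =>
        if q.1 ∈ S then u q.1 q.2 else 0) (∑ i : Fin n, X (i, j))) = ∑ i ∈ S, u i := by
      funext j
      rw [map_sum]
      simp only [eval_X]
      rw [Finset.sum_apply]
      rw [show (∑ i : Fin n, if (i, j).1 ∈ S then u (i, j).1 (i, j).2 else 0)
          = ∑ i ∈ Finset.univ ∩ S, u i j by rw [Finset.sum_ite_mem]]
      rw [Finset.univ_inter]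
    rw [hfun]
  calc ∑ S ∈ (Finset.univ.powerset : Finset (Finset (Fin n))),
        (-1 : F) ^ (n - S.card) * eval (∑ i ∈ S, u i) f
      = ∑ m ∈ G.support, ∑ S ∈ (Finset.univ.powerset : Finset (Finset (Fin n))),
          (-1 : F) ^ (n - S.card) * (G.coeff m *
            ∏ q : Fin n × Fin d, (if q.1 ∈ S then u q.1 q.2 else 0) ^ m q) := by
        rw [Finset.sum_comm]
        refine Finset.sum_congr rfl fun S _ => ?_
        rw [heval S, eval_eq', Finset.mul_sum]
    _ = 0 := by
        refine Finset.sum_eq_zero fun m hm => ?_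
        set I : Finset (Fin n) := m.support.image Prod.fst with hI
        have hIne : I ≠ Finset.univ := by
          intro hIuniv
          have h1 : n ≤ I.card := by rw [hIuniv, card_univ, Fintype.card_fin]
          have h2 : I.card ≤ m.support.card := card_image_le
          have h3 : m.support.card ≤ ∑ q ∈ m.support, m q := by
            rw [Finset.card_eq_sum_ones]
            exact Finset.sum_le_sum fun q hq =>
              Nat.one_le_iff_ne_zero.2 (Finsupp.mem_support_iff.1 hq)
          have h4 : (∑ q ∈ m.support, m q) ≤ G.totalDegree := le_totalDegree hm
          omega
        have hprod : ∀ S : Finset (Fin n),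
            (∏ q : Fin n × Fin d, (if q.1 ∈ S then u q.1 q.2 else 0) ^ m q)
            = if I ⊆ S then ∏ q : Fin n × Fin d, (u q.1 q.2) ^ m q else 0 := by
          intro S
          by_cases hIS : I ⊆ S
          · rw [if_pos hIS]
            refine Finset.prod_congr rfl fun q _ => ?_
            by_cases hq : m q = 0
            · rw [hq, pow_zero, pow_zero]
            · have : q.1 ∈ S := hIS (Finset.mem_image.2
                ⟨q, Finsupp.mem_support_iff.2 hq, rfl⟩)
              rw [if_pos this]
          · rw [if_neg hIS]
            obtain ⟨i, hiI, hiS⟩ := Finset.not_subset.1 hIS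
            obtain ⟨q, hq, hq1⟩ := Finset.mem_image.1 hiI
            refine Finset.prod_eq_zero (Finset.mem_univ q) ?_
            rw [hq1, if_neg hiS]
            exact zero_pow (Finsupp.mem_support_iff.1 hq)
        calc ∑ S ∈ (Finset.univ.powerset : Finset (Finset (Fin n))),
              (-1 : F) ^ (n - S.card) * (G.coeff m *
                ∏ q : Fin n × Fin d, (if q.1 ∈ S then u q.1 q.2 else 0) ^ m q)
            = ∑ S ∈ (Finset.univ.powerset : Finset (Finset (Fin n))),
              (if I ⊆ S then (G.coeff m * ∏ q : Fin n × Fin d, (u q.1 q.2) ^ m q)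
                  * (-1 : F) ^ (n - S.card) else 0) := by
              refine Finset.sum_congr rfl fun S _ => ?_
              rw [hprod S]
              by_cases hIS : I ⊆ S
              · rw [if_pos hIS, if_pos hIS]; ring
              · rw [if_neg hIS, if_neg hIS, mul_zero, mul_zero]
          _ = (G.coeff m * ∏ q : Fin n × Fin d, (u q.1 q.2) ^ m q) *
              ∑ S ∈ Finset.univ.powerset.filter (fun S : Finset (Fin n) => I ⊆ S),
                (-1 : F) ^ (n - S.card) := by
              rw [Finset.sum_filter, Finset.mul_sum]
              simp only [mul_ite, mul_zero]
          _ = 0 := by rw [sandwich_sum_eq_zero I hIne, mul_zero]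

/-- `∑_{k=0}^t (-1)^(t-k) C(t,k) k^e` over `ℤ`. -/
def altPowSum (t e : ℕ) : ℤ :=
  ∑ k ∈ Finset.range (t + 1), (-1 : ℤ) ^ (t - k) * (t.choose k : ℤ) * (k : ℤ) ^ e

lemma altPowSum_spec (t : ℕ) :
    (∀ e, e < t → altPowSum t e = 0) ∧ altPowSum t t = (t.factorial : ℤ) := by
  induction t with
  | zero =>
    refine ⟨fun e he => absurd he (Nat.not_lt_zero e), ?_⟩
    simp [altPowSum]
  | succ t ih =>
    have h0 : altPowSum (t + 1) 0 = 0 := by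
      have : ∀ k ∈ Finset.range (t + 2),
          (-1 : ℤ) ^ (t + 1 - k) * ((t+1).choose k : ℤ) * (k : ℤ) ^ 0
          = (-1 : ℤ) ^ (t+1) * ((-1 : ℤ) ^ k * ((t+1).choose k : ℤ)) := by
        intro k hk
        rw [mem_range] at hk
        rw [pow_zero, mul_one, neg_one_pow_sub' (by omega : k ≤ t + 1)]
        ring
      rw [altPowSum, Finset.sum_congr rfl this, ← Finset.mul_sum,
        Int.alternating_sum_range_choose_of_ne (Nat.succ_ne_zero t), mul_zero]
    have hrec : ∀ e : ℕ, 1 ≤ e → altPowSum (t + 1) e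
        = (t + 1 : ℤ) * ∑ i ∈ Finset.range e, ((e - 1).choose i : ℤ) * altPowSum t i := by
      intro e he
      have key : ∀ k ∈ Finset.range (t + 1),
          (-1 : ℤ) ^ (t + 1 - (k + 1)) * ((t+1).choose (k+1) : ℤ) * ((k + 1 : ℕ) : ℤ) ^ e
          = ∑ i ∈ Finset.range e, (t + 1 : ℤ) * ((e - 1).choose i : ℤ)
              * ((-1 : ℤ) ^ (t - k) * (t.choose k : ℤ) * (k : ℤ) ^ i) := by
        intro k hk
        have h1 : ((t+1).choose (k+1) : ℤ) * ((k : ℤ) + 1) = (t + 1 : ℤ) * (t.choose k : ℤ) := by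
          exact_mod_cast (Nat.add_one_mul_choose_eq t k).symm
        have h2 : ((k : ℤ) + 1) ^ (e - 1)
            = ∑ i ∈ Finset.range e, (k : ℤ) ^ i * ((e - 1).choose i : ℤ) := by
          have h3 := add_pow (k : ℤ) 1 (e - 1)
          simp only [one_pow, mul_one] at h3
          rw [h3, Nat.sub_add_cancel he]
        have h4 : t + 1 - (k + 1) = t - k := by omega
        have h5 : ((k + 1 : ℕ) : ℤ) ^ e = ((k : ℤ) + 1) ^ (e - 1) * ((k : ℤ) + 1) := by
          push_cast
          rw [← pow_succ, Nat.sub_add_cancel he]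
        rw [h4, h5, h2, Finset.sum_mul, Finset.mul_sum]
        refine Finset.sum_congr rfl fun i _ => ?_
        have hterm : (-1:ℤ)^(t-k) * ((t+1).choose (k+1) : ℤ) * ((k:ℤ)^i * ((e-1).choose i : ℤ) * ((k:ℤ)+1))
            = ((e-1).choose i : ℤ) * ((k:ℤ)^i * ((((t+1).choose (k+1) : ℤ) * ((k:ℤ)+1)) * (-1:ℤ)^(t-k))) := by
          ring
        rw [hterm, h1]
        ring
      rw [altPowSum, Finset.sum_range_succ']
      rw [show (-1 : ℤ) ^ (t + 1 - 0) * ((t+1).choose 0 : ℤ) * ((0:ℕ) : ℤ) ^ e = 0 by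
        rw [Nat.cast_zero, zero_pow (by omega : e ≠ 0), mul_zero], add_zero]
      rw [Finset.sum_congr rfl key, Finset.sum_comm]
      rw [Finset.mul_sum]
      refine Finset.sum_congr rfl fun i _ => ?_
      rw [← Finset.mul_sum]
      rw [show altPowSum t i = ∑ k ∈ Finset.range (t+1),
        (-1:ℤ)^(t-k) * (t.choose k : ℤ) * (k:ℤ)^i from rfl]
      ring
    constructor
    · intro e he
      rcases Nat.eq_zero_or_pos e with h | h
      · rw [h]; exact h0
      · rw [hrec e h]
        have : ∀ i ∈ Finset.range e, ((e - 1).choose i : ℤ) * altPowSum t i = 0 := by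
          intro i hi
          rw [mem_range] at hi
          rw [ih.1 i (by omega), mul_zero]
        rw [Finset.sum_congr rfl this, Finset.sum_const_zero, mul_zero]
    · rw [hrec (t + 1) (by omega), Finset.sum_range_succ]
      have : ∀ i ∈ Finset.range t, ((t + 1 - 1).choose i : ℤ) * altPowSum t i = 0 := by
        intro i hi
        rw [mem_range] at hi
        rw [ih.1 i hi, mul_zero]
      rw [Finset.sum_congr rfl this, Finset.sum_const_zero, zero_add]
      rw [show t + 1 - 1 = t by omega, Nat.choose_self, Nat.cast_one, one_mul, ih.2]
      rw [Nat.factorial_succ]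
      push_cast
      ring

/-- There is a map `Fin N → Fin d` whose fiber over `j` has exactly `m j` elements,
provided the total mass of `m` is `N`. -/
lemma exists_fiber_map {d N : ℕ} (m : Fin d →₀ ℕ) (hm : (m.sum fun _ e => e) = N) :
    ∃ c : Fin N → Fin d, ∀ j, (Finset.univ.filter fun i => c i = j).card = m j := by
  classical
  set T : Finset ((_ : Fin d) × ℕ) := m.support.sigma (fun j => Finset.range (m j)) with hT
  have hcard : T.card = N := by
    rw [hT, Finset.card_sigma]
    simpa [Finset.card_range, Finsupp.sum] using hm
  let E : ↥T ≃ Fin N := T.equivFin.trans (finCongr hcard)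
  refine ⟨fun i => ((E.symm i : ↥T) : (_ : Fin d) × ℕ).1, fun j => ?_⟩
  have h1 : (T.filter fun q => q.1 = j).card = m j := by
    rw [Finset.card_filter, hT, Finset.sum_sigma]
    have : ∀ j' ∈ m.support,
        (∑ k ∈ Finset.range (m j'), if (⟨j', k⟩ : (_ : Fin d) × ℕ).1 = j then 1 else 0)
        = if j' = j then m j' else 0 := by
      intro j' _
      by_cases h : j' = j <;> simp [h]
    rw [Finset.sum_congr rfl this, Finset.sum_ite_eq' m.support j (fun j' => m j')]
    by_cases h : j ∈ m.support
    · rw [if_pos h]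
    · rw [if_neg h, eq_comm, Finsupp.notMem_support_iff.1 h]
  rw [← h1]
  apply Finset.card_bij (fun i _ => ((E.symm i : ↥T) : (_ : Fin d) × ℕ))
  · intro i hi
    simp only [Finset.mem_filter] at hi ⊢
    exact ⟨(E.symm i).2, hi.2⟩
  · intro a ha b hb hab
    have := Subtype.coe_injective hab
    exact E.symm.injective this
  · intro q hq
    simp only [Finset.mem_filter] at hq
    refine ⟨E ⟨q, hq.1⟩, ?_, ?_⟩
    · simp only [Finset.mem_filter, Finset.mem_univ, true_and]
      rw [Equiv.symm_apply_apply]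
      exact hq.2
    · rw [Equiv.symm_apply_apply]

lemma fiber_factorization {F : Type*} [Field F] {d N : ℕ} (c : Fin N → Fin d)
    (g : Fin d → ℕ) :
    ∑ S ∈ (Finset.univ.powerset : Finset (Finset (Fin N))),
      (-1:F)^(N - S.card) * ∏ j : Fin d, ((S.filter fun i => c i = j).card : F) ^ (g j)
    = ∏ j : Fin d, ∑ A ∈ (Finset.univ.filter fun i => c i = j).powerset,
        (-1:F)^((Finset.univ.filter fun i => c i = j).card - A.card) * (A.card : F) ^ (g j) := by
  classical
  rw [Finset.prod_univ_sum]
  have hNsum : ∑ j : Fin d, (Finset.univ.filter fun i => c i = j).card = N := by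
    have := Finset.card_eq_sum_card_fiberwise
      (f := c) (s := (Finset.univ : Finset (Fin N))) (t := Finset.univ)
      (fun x _ => Finset.mem_univ (c x))
    simpa using this.symm
  refine Finset.sum_nbij' (fun S => fun j => S.filter fun i => c i = j)
    (fun p => Finset.univ.filter fun i => i ∈ p (c i)) ?_ ?_ ?_ ?_ ?_
  · intro S _
    rw [Fintype.mem_piFinset]
    intro j
    exact Finset.mem_powerset.2 (Finset.filter_subset_filter _ (Finset.subset_univ S))
  · intro p _
    exact Finset.mem_powerset.2 (Finset.subset_univ _)
  · intro S _
    ext i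
    simp
  · intro p hp
    rw [Fintype.mem_piFinset] at hp
    funext j
    ext i
    simp only [Finset.mem_filter, Finset.mem_univ, true_and]
    constructor
    · rintro ⟨hi, rfl⟩
      exact hi
    · intro hi
      have : c i = j := by
        have := Finset.mem_powerset.1 (hp j)
        have := this hi
        simp only [Finset.mem_filter] at this
        exact this.2
      exact ⟨by rwa [this], this⟩
  · intro S hS
    have hsj : ∀ j, (S.filter fun i => c i = j).card
        ≤ (Finset.univ.filter fun i => c i = j).card :=
      fun j => Finset.card_le_card (Finset.filter_subset_filter _ (Finset.subset_univ S))
    have hSsum : ∑ j : Fin d, (S.filter fun i => c i = j).card = S.card := by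
      have := Finset.card_eq_sum_card_fiberwise
        (f := c) (s := S) (t := Finset.univ) (fun x _ => Finset.mem_univ (c x))
      exact this.symm
    have hsign : ∏ j : Fin d, (-1:F)^((Finset.univ.filter fun i => c i = j).card
          - (S.filter fun i => c i = j).card) = (-1:F)^(N - S.card) := by
      have h1 : ∀ j : Fin d, (-1:F)^((Finset.univ.filter fun i => c i = j).card
            - (S.filter fun i => c i = j).card)
          = (-1:F)^((Finset.univ.filter fun i => c i = j).card)
            * (-1:F)^((S.filter fun i => c i = j).card) :=
        fun j => neg_one_pow_sub' (hsj j)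
      rw [Finset.prod_congr rfl (fun j _ => h1 j), Finset.prod_mul_distrib,
        Finset.prod_pow_eq_pow_sum, Finset.prod_pow_eq_pow_sum, hNsum, hSsum]
      rw [neg_one_pow_sub' (by simpa using Finset.card_le_card (Finset.subset_univ S))]
    rw [← hsign, ← Finset.prod_mul_distrib]

lemma fnDefect_eq_sum_powerset {F V : Type*} [Field F] [AddCommGroup V]
    (α : V → F) (hα : α 0 = 0) (n : ℕ) (u : Fin n → V) :
    fnDefect α n u = ∑ S ∈ (Finset.univ.powerset : Finset (Finset (Fin n))),
      (-1 : F) ^ (n - S.card) * α (∑ i ∈ S, u i) := by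
  rw [fnDefect]
  rw [← Finset.sum_filter_add_sum_filter_not Finset.univ.powerset
    (fun S : Finset (Fin n) => S.Nonempty)]
  have hz : ∑ S ∈ Finset.univ.powerset.filter
      (fun S : Finset (Fin n) => ¬ S.Nonempty), (-1 : F) ^ (n - S.card) * α (∑ i ∈ S, u i)
      = 0 := by
    refine Finset.sum_eq_zero fun S hS => ?_
    simp only [Finset.mem_filter, Finset.not_nonempty_iff_eq_empty] at hS
    rw [hS.2, Finset.sum_empty, hα, mul_zero]
  rw [hz, add_zero]

/-- Evaluation of the alternating powerset-card sum as `altPowSum`. -/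
lemma powerset_card_alt_sum {F : Type*} [Field F] {ι : Type*} [DecidableEq ι]
    (s : Finset ι) (e : ℕ) :
    ∑ A ∈ s.powerset, (-1:F)^(s.card - A.card) * (A.card : F) ^ e
    = ((altPowSum s.card e : ℤ) : F) := by
  rw [Finset.sum_powerset_apply_card (f := fun k => (-1:F)^(s.card - k) * (k:F)^e)]
  rw [altPowSum]
  push_cast
  refine Finset.sum_congr rfl fun k _ => ?_
  rw [nsmul_eq_mul]
  ring

/-- let `F` be a prime field `𝔽_p` (`p` prime, `|F| = p`) or a field of
characteristic `0`, and let `f` be a nonzero polynomial with `f(0) = 0`, reduced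
(all exponents `< p`) in the finite case. Then the combinatorial degree of the
evaluation function of `f`, i.e. the `N` with `Δ^N α ≢ 0` and `Δ^{N+1} α ≡ 0`,
equals the total degree of `f`. -/
theorem combinatorial_degree_eq_totalDegree_over_prime_field
    {F : Type*} [Field F] {p : ℕ} [CharP F p]
    (hp : p = 0 ∨ (p.Prime ∧ Nat.card F = p))
    {d : ℕ} (f : MvPolynomial (Fin d) F) (hf : f ≠ 0)
    (h0 : MvPolynomial.constantCoeff f = 0)
    (hred : p ≠ 0 → ∀ m ∈ f.support, ∀ j, m j < p)
    (N : ℕ) (hN : N = f.totalDegree) :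
    (∃ u : Fin N → (Fin d → F), fnDefect (fun a => MvPolynomial.eval a f) N u ≠ 0) ∧
    (∀ u : Fin (N + 1) → (Fin d → F),
      fnDefect (fun a => MvPolynomial.eval a f) (N + 1) u = 0) := by
  classical
  have hα0 : (fun a : Fin d → F => MvPolynomial.eval a f) 0 = 0 := by
    simp only []
    rw [show (MvPolynomial.eval (0 : Fin d → F)) f = constantCoeff f from
      congrFun (congrArg _ MvPolynomial.eval_zero) f]
    exact h0
  constructor
  · -- part 1 : nonvanishing at degree N
    have hsupp : f.support.Nonempty := by
      rw [Finset.nonempty_iff_ne_empty]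
      intro h
      exact hf (MvPolynomial.support_eq_empty.1 h)
    obtain ⟨m0, hm0supp, hm0deg⟩ : ∃ m0 ∈ f.support, (m0.sum fun _ e => e) = N := by
      obtain ⟨m0, hm, hsup⟩ := Finset.exists_mem_eq_sup f.support hsupp
        (fun s : Fin d →₀ ℕ => s.sum fun _ e => e)
      refine ⟨m0, hm, ?_⟩
      rw [hN]
      exact hsup.symm
    obtain ⟨c, hc⟩ := exists_fiber_map m0 hm0deg
    set u : Fin N → (Fin d → F) := fun i j => if c i = j then (1:F) else 0 with hu
    have hpoint : ∀ (S : Finset (Fin N)) (j : Fin d),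
        (∑ i ∈ S, u i) j = ((S.filter fun i => c i = j).card : F) := by
      intro S j
      rw [Finset.sum_apply]
      simp only [hu]
      rw [Finset.sum_boole]
    have hsum_univ : ∀ m : Fin d →₀ ℕ, (m.sum fun _ e => e) = ∑ j : Fin d, m j := by
      intro m
      rw [Finsupp.sum_fintype]
      intro j; rfl
    refine ⟨u, ?_⟩
    have hdefect : fnDefect (fun a => MvPolynomial.eval a f) N u
        = MvPolynomial.coeff m0 f * ((∏ j : Fin d, (m0 j).factorial : ℕ) : F) := by
      rw [fnDefect_eq_sum_powerset _ hα0 N u]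
      have step1 : ∀ S : Finset (Fin N), MvPolynomial.eval (∑ i ∈ S, u i) f
          = ∑ m ∈ f.support, MvPolynomial.coeff m f *
              ∏ j : Fin d, ((S.filter fun i => c i = j).card : F) ^ (m j) := by
        intro S
        rw [MvPolynomial.eval_eq']
        refine Finset.sum_congr rfl fun m _ => ?_
        congr 1
        exact Finset.prod_congr rfl fun j _ => by rw [hpoint S j]
      calc ∑ S ∈ (Finset.univ.powerset : Finset (Finset (Fin N))),
            (-1 : F) ^ (N - S.card) * MvPolynomial.eval (∑ i ∈ S, u i) f
          = ∑ S ∈ (Finset.univ.powerset : Finset (Finset (Fin N))),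
              ∑ m ∈ f.support, MvPolynomial.coeff m f *
                ((-1 : F) ^ (N - S.card) *
                  ∏ j : Fin d, ((S.filter fun i => c i = j).card : F) ^ (m j)) := by
            refine Finset.sum_congr rfl fun S _ => ?_
            rw [step1 S, Finset.mul_sum]
            exact Finset.sum_congr rfl fun m _ => by ring
        _ = ∑ m ∈ f.support, MvPolynomial.coeff m f *
              ∑ S ∈ (Finset.univ.powerset : Finset (Finset (Fin N))),
                (-1 : F) ^ (N - S.card) *
                  ∏ j : Fin d, ((S.filter fun i => c i = j).card : F) ^ (m j) := by
            rw [Finset.sum_comm]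
            exact Finset.sum_congr rfl fun m _ => by rw [← Finset.mul_sum]
        _ = ∑ m ∈ f.support, MvPolynomial.coeff m f *
              ∏ j : Fin d, ((altPowSum (m0 j) (m j) : ℤ) : F) := by
            refine Finset.sum_congr rfl fun m _ => ?_
            rw [fiber_factorization c (fun j => m j)]
            congr 1
            refine Finset.prod_congr rfl fun j _ => ?_
            rw [powerset_card_alt_sum, hc j]
        _ = MvPolynomial.coeff m0 f * ((∏ j : Fin d, (m0 j).factorial : ℕ) : F) := by
            rw [Finset.sum_eq_single_of_mem m0 hm0supp]
            · congr 1
              rw [Nat.cast_prod]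
              exact Finset.prod_congr rfl fun j _ => by
                rw [(altPowSum_spec (m0 j)).2, Int.cast_natCast]
            · intro m hm hne
              have hkill : ∃ j, m j < m0 j := by
                by_contra hcon
                push_neg at hcon
                have heq : ∀ j, m j = m0 j := by
                  intro j
                  by_contra hje
                  have hlt : m0 j < m j := lt_of_le_of_ne (hcon j) (Ne.symm hje)
                  have h1 : ∑ j : Fin d, m0 j < ∑ j : Fin d, m j :=
                    Finset.sum_lt_sum (fun i _ => hcon i) ⟨j, Finset.mem_univ j, hlt⟩
                  have h2 : (m.sum fun _ e => e) ≤ N := by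
                    rw [hN]; exact MvPolynomial.le_totalDegree hm
                  rw [hsum_univ] at h2
                  rw [hsum_univ] at hm0deg
                  omega
                exact hne (Finsupp.ext heq)
              obtain ⟨j, hj⟩ := hkill
              rw [Finset.prod_eq_zero (Finset.mem_univ j), mul_zero]
              rw [(altPowSum_spec (m0 j)).1 (m j) hj]
              exact Int.cast_zero
    rw [hdefect]
    have hcoeff : MvPolynomial.coeff m0 f ≠ 0 := MvPolynomial.mem_support_iff.1 hm0supp
    have hfact : ((∏ j : Fin d, (m0 j).factorial : ℕ) : F) ≠ 0 := by
      rcases hp with hp0 | ⟨hpp, _⟩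
      · haveI : CharP F 0 := by rw [← hp0]; infer_instance
        haveI : CharZero F := CharP.charP_to_charZero F
        exact Nat.cast_ne_zero.2
          (Finset.prod_pos fun j _ => Nat.factorial_pos _).ne'
      · rw [Ne, CharP.cast_eq_zero_iff F p]
        intro hdvd
        obtain ⟨j, _, hjdvd⟩ := (hpp.prime.dvd_finset_prod_iff _).1 hdvd
        have hle := (Nat.Prime.dvd_factorial hpp).1 hjdvd
        have := hred hpp.ne_zero m0 hm0supp j
        omega
    exact mul_ne_zero hcoeff hfact
  · -- part 2 : vanishing at degree N + 1
    intro u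
    rw [fnDefect_eq_sum_powerset _ hα0 (N + 1) u]
    exact alt_sum_eval_eq_zero f (by omega) u
end

section
/- Let F be a finite field, let f ∈ F[x_1,…,x_d] be a reduced polynomial (every exponent occurring in f is less than |F|), let α : F^d → F be its evaluation function, and let n ≥ 1. Then α(a·u) = a^n·α(u) for all a ∈ F and u ∈ F^d if and only if every monomial in the support of f has positive total degree congruent to n modulo |F| − 1. -/
open MvPolynomial Finset

private lemma pow_mod_card_sub_one {F : Type*} [Field F] [Fintype F] {a : F} (ha : a ≠ 0)
    (k : ℕ) : a ^ k = a ^ (k % (Fintype.card F - 1)) := by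
  conv_lhs => rw [← Nat.div_add_mod k (Fintype.card F - 1)]
  rw [pow_add, pow_mul, FiniteField.pow_card_sub_one_eq_one a ha, one_pow, one_mul]

universe u

private lemma reduced_eq_zero {K : Type u} [Field K] [Fintype K] {d : ℕ}
    (p : MvPolynomial (Fin d) K) (h : ∀ v : Fin d → K, MvPolynomial.eval v p = 0)
    (hp : ∀ s ∈ p.support, ∀ i, s i ≤ Fintype.card K - 1) : p = 0 := by
  classical
  let e : Fin d ≃ ULift.{u} (Fin d) := Equiv.ulift.symm
  have hq : MvPolynomial.rename e p = 0 := by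
    apply MvPolynomial.eq_zero_of_eval_eq_zero
    · intro v
      rw [MvPolynomial.eval_rename]
      exact h _
    · rw [MvPolynomial.mem_restrictDegree]
      intro s hs i
      rw [MvPolynomial.support_rename_of_injective e.injective, Finset.mem_image] at hs
      obtain ⟨m, hm, rfl⟩ := hs
      have : i = e (e.symm i) := (e.apply_symm_apply i).symm
      rw [this, Finsupp.mapDomain_apply e.injective]
      exact hp m hm _
  have := MvPolynomial.rename_injective (R := K) e e.injective
  exact this (by rw [hq, map_zero])

private lemma eval_smul_aux {F : Type*} [CommSemiring F] {d : ℕ}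
    (f : MvPolynomial (Fin d) F) (a : F) (u : Fin d → F) :
    MvPolynomial.eval (a • u) f =
      ∑ m ∈ f.support, MvPolynomial.coeff m f * a ^ (m.sum fun _ e => e) *
        ∏ i ∈ m.support, u i ^ m i := by
  rw [MvPolynomial.eval_eq]
  refine Finset.sum_congr rfl fun m _ => ?_
  have : ∏ i ∈ m.support, (a • u) i ^ m i =
      (∏ i ∈ m.support, a ^ m i) * ∏ i ∈ m.support, u i ^ m i := by
    rw [← Finset.prod_mul_distrib]
    refine Finset.prod_congr rfl fun i _ => ?_
    simp [Pi.smul_apply, smul_eq_mul, mul_pow]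
  rw [this, Finset.prod_pow_eq_pow_sum, Finsupp.sum, mul_assoc, ← mul_assoc]

/-- let `F` be a finite field, `f` a reduced polynomial (all exponents
`< |F|`), `α` its evaluation function and `n ≥ 1`. Then `α(a·u) = a^n·α(u)` for all
`a ∈ F`, `u ∈ F^d` if and only if every monomial in the support of `f` has positive total
degree congruent to `n` modulo `|F| − 1`. -/
theorem homogeneity_iff_degrees_congruent
    {F : Type*} [Field F] [Fintype F]
    {d : ℕ} (f : MvPolynomial (Fin d) F)
    (hred : ∀ m ∈ f.support, ∀ j, m j < Fintype.card F)
    (n : ℕ) (hn : 1 ≤ n) :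
    (∀ (a : F) (u : Fin d → F),
        MvPolynomial.eval (a • u) f = a ^ n * MvPolynomial.eval u f) ↔
    (∀ m ∈ f.support, 0 < (m.sum fun _ e => e) ∧
        (m.sum fun _ e => e) ≡ n [MOD Fintype.card F - 1]) := by
  classical
  constructor
  · intro h m hm
    -- key: for every `a : F`, `a ^ deg m = a ^ n`
    have key : ∀ a : F, a ^ (m.sum fun _ e => e) = a ^ n := by
      intro a
      set g : MvPolynomial (Fin d) F :=
        ∑ m' ∈ f.support,
          MvPolynomial.monomial m'
            ((a ^ (m'.sum fun _ e => e) - a ^ n) * MvPolynomial.coeff m' f) with hg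
      have hgsupp : g.support ⊆ f.support := by
        refine (MvPolynomial.support_sum).trans ?_
        intro s hs
        simp only [Finset.mem_biUnion] at hs
        obtain ⟨m', hm', hs⟩ := hs
        have := MvPolynomial.support_monomial_subset hs
        simp only [Finset.mem_singleton] at this
        exact this ▸ hm'
      have hgzero : g = 0 := by
        apply reduced_eq_zero
        · intro v
          have hv := h a v
          rw [eval_smul_aux] at hv
          rw [hg, map_sum]
          simp only [MvPolynomial.eval_monomial]
          rw [MvPolynomial.eval_eq, Finset.mul_sum] at hv
          rw [← sub_eq_zero] at hv
          rw [← hv, ← Finset.sum_sub_distrib]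
          refine Finset.sum_congr rfl fun m' _ => ?_
          simp only [Finsupp.prod]
          ring
        · intro s hs i
          exact Nat.le_sub_one_of_lt (hred s (hgsupp hs) i)
      have hc0 : MvPolynomial.coeff m g = 0 := by rw [hgzero]; simp
      rw [hg, MvPolynomial.coeff_sum] at hc0
      simp only [MvPolynomial.coeff_monomial] at hc0
      rw [Finset.sum_ite_eq' f.support m
        (fun m' => (a ^ (m'.sum fun _ e => e) - a ^ n) * MvPolynomial.coeff m' f),
        if_pos hm] at hc0
      have hc : MvPolynomial.coeff m f ≠ 0 := MvPolynomial.mem_support_iff.mp hm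
      exact sub_eq_zero.mp ((mul_eq_zero.mp hc0).resolve_right hc)
    constructor
    · rcases Nat.eq_zero_or_pos (m.sum fun _ e => e) with h0 | h0
      · exfalso
        have h1 := key 0
        rw [h0, pow_zero, zero_pow (by omega : n ≠ 0)] at h1
        exact one_ne_zero h1
      · exact h0
    · obtain ⟨g, hg⟩ := IsCyclic.exists_generator (α := Fˣ)
      have horder : orderOf g = Fintype.card F - 1 := by
        rw [orderOf_eq_card_of_forall_mem_zpowers hg, Nat.card_eq_fintype_card,
          Fintype.card_units]
      have hk := key (g : F)
      have hgu : g ^ (m.sum fun _ e => e) = g ^ n := by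
        ext
        push_cast
        exact hk
      rw [pow_eq_pow_iff_modEq, horder] at hgu
      exact hgu
  · intro h a u
    rw [eval_smul_aux, MvPolynomial.eval_eq, Finset.mul_sum]
    refine Finset.sum_congr rfl fun m hm => ?_
    obtain ⟨hpos, hmod⟩ := h m hm
    have hpow : a ^ (m.sum fun _ e => e) = a ^ n := by
      rcases eq_or_ne a 0 with rfl | ha
      · rw [zero_pow (by omega : (m.sum fun _ e => e) ≠ 0), zero_pow (by omega : n ≠ 0)]
      · rw [pow_mod_card_sub_one ha, pow_mod_card_sub_one ha n, hmod]
    rw [hpow]; ring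
end
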